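/- If RCA₀ proves a formula φ, then EL₀ + MP proves the Kuroda negative translation φ^q of φ. -/

import Mathlib

/-!
# Formalised framework for "Weihrauch reducibility and intuitionistic logic"

We formalise the two-sorted language of `EL₀`, the sequent calculus `IQC`
(together with its affine variants), the axiom systems `EL₀`, `EL₀ + MP` and
`RCA₀`, contraction-similarity, the realisability notion of the paper, and the
formalised Weihrauch-reducibility statements.

Multi-ary primitive recursive function symbols are represented via a primitive
pairing constructor together with a function symbol for every (unary)
primitive recursive function.
-/

namespace WeihrauchEL

/-! ## Terms -/

mutual
  /-- Number terms of the language of `EL₀`. -/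
  inductive NTerm : Type
    | var : ℕ → NTerm
    | zero : NTerm
    | succ : NTerm → NTerm
    | pair : NTerm → NTerm → NTerm
    | prim : (f : ℕ → ℕ) → Nat.Primrec f → NTerm → NTerm
    | app : FTerm → NTerm → NTerm
  /-- Function terms of the language of `EL₀`. -/
  inductive FTerm : Type
    | fvar : ℕ → FTerm
    | lam : ℕ → NTerm → FTerm
    | recOp : NTerm → FTerm → FTerm
end

/-! ## Formulas -/

/-- Formulas of the language of `EL₀`.  The only atomic relation is equality
on the number sort; `¬φ` abbreviates `φ → ⊥` and `∨` is a defined connective. -/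
inductive Formula : Type
  | eq : NTerm → NTerm → Formula
  | falsum : Formula
  | and : Formula → Formula → Formula
  | imp : Formula → Formula → Formula
  | nall : ℕ → Formula → Formula
  | nex : ℕ → Formula → Formula
  | fall : ℕ → Formula → Formula
  | fex : ℕ → Formula → Formula

/-- Negation. -/
def Formula.neg (φ : Formula) : Formula := φ.imp .falsum

/-- The canonical true atomic formula `0 = 0`. -/
def trueF : Formula := .eq .zero .zero

/-- Finite conjunction. -/
def bigAnd (l : List Formula) : Formula := l.foldr .and trueF

/-- The defined disjunction `φ ∨ ψ := ∃x((x = 0 → φ) ∧ (x ≠ 0 → ψ))`. -/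
def vee (x : ℕ) (φ ψ : Formula) : Formula :=
  .nex x (.and ((Formula.eq (.var x) .zero).imp φ)
    (((Formula.eq (.var x) .zero).neg).imp ψ))

/-- Atomic formulas. -/
def Atomic : Formula → Prop
  | .eq _ _ => True
  | .falsum => True
  | _ => False

/-- Quantifier-free formulas. -/
def Formula.QFree : Formula → Prop
  | .eq _ _ => True
  | .falsum => True
  | .and a b => a.QFree ∧ b.QFree
  | .imp a b => a.QFree ∧ b.QFree
  | _ => False

/-- Arithmetical formulas: no function quantifiers. -/
def Formula.Arith : Formula → Prop
  | .eq _ _ => True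
  | .falsum => True
  | .and a b => a.Arith ∧ b.Arith
  | .imp a b => a.Arith ∧ b.Arith
  | .nall _ a => a.Arith
  | .nex _ a => a.Arith
  | .fall _ _ => False
  | .fex _ _ => False

/-! ## Substitution -/

mutual
  /-- Simultaneous substitution in number terms. -/
  def NTerm.substAll (σ : ℕ → NTerm) (σF : ℕ → FTerm) : NTerm → NTerm
    | .var i => σ i
    | .zero => .zero
    | .succ t => .succ (t.substAll σ σF)
    | .pair t s => .pair (t.substAll σ σF) (s.substAll σ σF)
    | .prim f hf t => .prim f hf (t.substAll σ σF)
    | .app τ t => .app (τ.substAll σ σF) (t.substAll σ σF)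
  /-- Simultaneous substitution in function terms. -/
  def FTerm.substAll (σ : ℕ → NTerm) (σF : ℕ → FTerm) : FTerm → FTerm
    | .fvar i => σF i
    | .lam x t => .lam x (t.substAll (Function.update σ x (.var x)) σF)
    | .recOp t τ => .recOp (t.substAll σ σF) (τ.substAll σ σF)
end

/-- Simultaneous substitution in formulas. -/
def Formula.substAll (σ : ℕ → NTerm) (σF : ℕ → FTerm) : Formula → Formula
  | .eq t s => .eq (t.substAll σ σF) (s.substAll σ σF)
  | .falsum => .falsum
  | .and a b => .and (a.substAll σ σF) (b.substAll σ σF)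
  | .imp a b => .imp (a.substAll σ σF) (b.substAll σ σF)
  | .nall x a => .nall x (a.substAll (Function.update σ x (.var x)) σF)
  | .nex x a => .nex x (a.substAll (Function.update σ x (.var x)) σF)
  | .fall x a => .fall x (a.substAll σ (Function.update σF x (.fvar x)))
  | .fex x a => .fex x (a.substAll σ (Function.update σF x (.fvar x)))

/-- Substitution `φ[x := t]` of a number term for a number variable. -/
def Formula.substN (φ : Formula) (x : ℕ) (t : NTerm) : Formula :=
  φ.substAll (Function.update NTerm.var x t) FTerm.fvar

/-- Substitution `φ[α := τ]` of a function term for a function variable. -/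
def Formula.substF (φ : Formula) (x : ℕ) (τ : FTerm) : Formula :=
  φ.substAll NTerm.var (Function.update FTerm.fvar x τ)

/-- Substitution `t[x := s]` in number terms. -/
def NTerm.substN (t : NTerm) (x : ℕ) (s : NTerm) : NTerm :=
  t.substAll (Function.update NTerm.var x s) FTerm.fvar

/-! ## Free and bound variables -/

mutual
  /-- Free number variables of a number term. -/
  def NTerm.fvN : NTerm → List ℕ
    | .var i => [i]
    | .zero => []
    | .succ t => t.fvN
    | .pair t s => t.fvN ++ s.fvN
    | .prim _ _ t => t.fvN
    | .app τ t => τ.fvN ++ t.fvN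
  /-- Free number variables of a function term. -/
  def FTerm.fvN : FTerm → List ℕ
    | .fvar _ => []
    | .lam x t => t.fvN.filter (· ≠ x)
    | .recOp t τ => t.fvN ++ τ.fvN
end

mutual
  /-- Free function variables of a number term. -/
  def NTerm.fvF : NTerm → List ℕ
    | .var _ => []
    | .zero => []
    | .succ t => t.fvF
    | .pair t s => t.fvF ++ s.fvF
    | .prim _ _ t => t.fvF
    | .app τ t => τ.fvF ++ t.fvF
  /-- Free function variables of a function term. -/
  def FTerm.fvF : FTerm → List ℕ
    | .fvar i => [i]
    | .lam _ t => t.fvF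
    | .recOp t τ => t.fvF ++ τ.fvF
end

/-- Free number variables of a formula. -/
def Formula.fvN : Formula → List ℕ
  | .eq t s => t.fvN ++ s.fvN
  | .falsum => []
  | .and a b => a.fvN ++ b.fvN
  | .imp a b => a.fvN ++ b.fvN
  | .nall x a => a.fvN.filter (· ≠ x)
  | .nex x a => a.fvN.filter (· ≠ x)
  | .fall _ a => a.fvN
  | .fex _ a => a.fvN

/-- Free function variables of a formula. -/
def Formula.fvF : Formula → List ℕ
  | .eq t s => t.fvF ++ s.fvF
  | .falsum => []
  | .and a b => a.fvF ++ b.fvF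
  | .imp a b => a.fvF ++ b.fvF
  | .nall _ a => a.fvF
  | .nex _ a => a.fvF
  | .fall x a => a.fvF.filter (· ≠ x)
  | .fex x a => a.fvF.filter (· ≠ x)

/-- Number variables bound by a quantifier somewhere in the formula. -/
def Formula.qbN : Formula → List ℕ
  | .eq _ _ => []
  | .falsum => []
  | .and a b => a.qbN ++ b.qbN
  | .imp a b => a.qbN ++ b.qbN
  | .nall x a => x :: a.qbN
  | .nex x a => x :: a.qbN
  | .fall _ a => a.qbN
  | .fex _ a => a.qbN

/-- Function variables bound by a quantifier somewhere in the formula. -/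
def Formula.qbF : Formula → List ℕ
  | .eq _ _ => []
  | .falsum => []
  | .and a b => a.qbF ++ b.qbF
  | .imp a b => a.qbF ++ b.qbF
  | .nall _ a => a.qbF
  | .nex _ a => a.qbF
  | .fall x a => x :: a.qbF
  | .fex x a => x :: a.qbF

/-! ## Semantics in the standard model -/

mutual
  /-- Value of a number term under a valuation. -/
  def evalN (ρ : ℕ → ℕ) (ρF : ℕ → ℕ → ℕ) : NTerm → ℕ
    | .var i => ρ i
    | .zero => 0
    | .succ t => evalN ρ ρF t + 1
    | .pair t s => Nat.pair (evalN ρ ρF t) (evalN ρ ρF s)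
    | .prim f _ t => f (evalN ρ ρF t)
    | .app τ t => evalF ρ ρF τ (evalN ρ ρF t)
  /-- Value of a function term under a valuation. -/
  def evalF (ρ : ℕ → ℕ) (ρF : ℕ → ℕ → ℕ) : FTerm → ℕ → ℕ
    | .fvar i => ρF i
    | .lam x t => fun n => evalN (Function.update ρ x n) ρF t
    | .recOp t τ => fun n =>
        Nat.rec (motive := fun _ => ℕ) (evalN ρ ρF t) (fun _ ih => evalF ρ ρF τ ih) n
end

/-- Truth of a formula in the standard two-sorted model, under a valuation. -/
def Truth (ρ : ℕ → ℕ) (ρF : ℕ → ℕ → ℕ) : Formula → Prop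
  | .eq t s => evalN ρ ρF t = evalN ρ ρF s
  | .falsum => False
  | .and a b => Truth ρ ρF a ∧ Truth ρ ρF b
  | .imp a b => Truth ρ ρF a → Truth ρ ρF b
  | .nall x a => ∀ n : ℕ, Truth (Function.update ρ x n) ρF a
  | .nex x a => ∃ n : ℕ, Truth (Function.update ρ x n) ρF a
  | .fall x a => ∀ g : ℕ → ℕ, Truth ρ (Function.update ρF x g) a
  | .fex x a => ∃ g : ℕ → ℕ, Truth ρ (Function.update ρF x g) a

/-- Truth in the standard model (of the universal closure). -/
def FTrue (φ : Formula) : Prop := ∀ ρ ρF, Truth ρ ρF φ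

/-! ## The sequent calculus -/

/-- A calculus datum records which formulas may be contracted, which formulas
may be introduced by weakening, and which cut formulas are allowed. -/
structure Calculus where
  contr : Formula → Prop
  weak : Formula → Prop
  cut : Formula → Prop

/-- The sequent calculus `IQC` of the paper, relative to a set `H` of
hypothesis sequents (axioms are hypothesis sequents with empty antecedent) and
a calculus datum `C` governing contraction, weakening and cut. -/
inductive Der (H : Set (List Formula × Formula)) (C : Calculus) :
    List Formula → Formula → Prop
  | hyp {Γ φ} : (Γ, φ) ∈ H → Der H C Γ φ
  | id {A} : Atomic A → Der H C [A] A
  | exfalso {Γ A} : Der H C Γ .falsum → Atomic A → Der H C Γ A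
  | andL {Γ ψ₁ ψ₂ φ} : Der H C (ψ₁ :: ψ₂ :: Γ) φ → Der H C (.and ψ₁ ψ₂ :: Γ) φ
  | andR {Γ₁ Γ₂ φ₁ φ₂} : Der H C Γ₁ φ₁ → Der H C Γ₂ φ₂ →
      Der H C (Γ₁ ++ Γ₂) (.and φ₁ φ₂)
  | impL {Γ₁ Γ₂ ψ₁ ψ₂ φ} : Der H C Γ₁ ψ₁ → Der H C (ψ₂ :: Γ₂) φ →
      (ψ₂ = .falsum → φ = .falsum) → Der H C (.imp ψ₁ ψ₂ :: (Γ₁ ++ Γ₂)) φ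
  | impR {Γ φ₁ φ₂} : Der H C (φ₁ :: Γ) φ₂ → Der H C Γ (.imp φ₁ φ₂)
  | nallL {Γ ψ φ x t} : Der H C (ψ.substN x t :: Γ) φ → Der H C (.nall x ψ :: Γ) φ
  | nallR {Γ φ x y} : Der H C Γ (φ.substN x (.var y)) →
      (∀ χ ∈ Γ, y ∉ χ.fvN) → y ∉ (Formula.nall x φ).fvN → Der H C Γ (.nall x φ)
  | nexR {Γ φ x t} : Der H C Γ (φ.substN x t) → Der H C Γ (.nex x φ)
  | nexL {Γ ψ φ x y} : Der H C (ψ.substN x (.var y) :: Γ) φ →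
      (∀ χ ∈ Γ, y ∉ χ.fvN) → y ∉ φ.fvN → y ∉ (Formula.nex x ψ).fvN →
      Der H C (.nex x ψ :: Γ) φ
  | fallL {Γ ψ φ x} {τ : FTerm} : Der H C (ψ.substF x τ :: Γ) φ →
      Der H C (.fall x ψ :: Γ) φ
  | fallR {Γ φ x y} : Der H C Γ (φ.substF x (.fvar y)) →
      (∀ χ ∈ Γ, y ∉ χ.fvF) → y ∉ (Formula.fall x φ).fvF → Der H C Γ (.fall x φ)
  | fexR {Γ φ x} {τ : FTerm} : Der H C Γ (φ.substF x τ) → Der H C Γ (.fex x φ)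
  | fexL {Γ ψ φ x y} : Der H C (ψ.substF x (.fvar y) :: Γ) φ →
      (∀ χ ∈ Γ, y ∉ χ.fvF) → y ∉ φ.fvF → y ∉ (Formula.fex x ψ).fvF →
      Der H C (.fex x ψ :: Γ) φ
  | wk {Γ ψ φ} : Der H C Γ φ → C.weak ψ → Der H C (ψ :: Γ) φ
  | contr {Γ ψ φ} : Der H C (ψ :: ψ :: Γ) φ → C.contr ψ → Der H C (ψ :: Γ) φ
  | perm {Γ Γ' φ} : Der H C Γ φ → Γ.Perm Γ' → Der H C Γ' φ
  | cut {Γ₁ Γ₂ ψ φ} : Der H C Γ₁ ψ → Der H C (ψ :: Γ₂) φ → C.cut ψ →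
      Der H C (Γ₁ ++ Γ₂) φ

/-- The unrestricted calculus (full `IQC`). -/
def fullC : Calculus := ⟨fun _ => True, fun _ => True, fun _ => True⟩

/-- The affine calculus: no contraction. -/
def affineC : Calculus := ⟨fun _ => False, fun _ => True, fun _ => True⟩

/-- The affine calculus in which moreover all proofs are free-cut free with
respect to the axiom set `S`: principal cut formulas must belong to `S`. -/
def affineFCF (S : Set Formula) : Calculus :=
  ⟨fun _ => False, fun _ => True, fun φ => φ ∈ S⟩

/-- Subformula relation. -/
inductive Subf : Formula → Formula → Prop
  | refl (φ) : Subf φ φ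
  | andl {φ a b} : Subf φ a → Subf φ (.and a b)
  | andr {φ a b} : Subf φ b → Subf φ (.and a b)
  | impl {φ a b} : Subf φ a → Subf φ (.imp a b)
  | impr {φ a b} : Subf φ b → Subf φ (.imp a b)
  | nall {φ x a} : Subf φ a → Subf φ (.nall x a)
  | nex {φ x a} : Subf φ a → Subf φ (.nex x a)
  | fall {φ x a} : Subf φ a → Subf φ (.fall x a)
  | fex {φ x a} : Subf φ a → Subf φ (.fex x a)

/-- The calculus `IQC^{∃αa}`: contraction only for formulas without function
quantifiers, weakening only for subformulas of formulas `∃α ψ` with `ψ`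
containing no function quantifiers. -/
def existsAlphaAffineC : Calculus :=
  ⟨fun φ => φ.Arith,
   fun φ => ∃ (a : ℕ) (ψ : Formula), ψ.Arith ∧ Subf φ (.fex a ψ),
   fun _ => True⟩

/-! ## The axioms of `EL₀`, `MP` and `LEM` -/

/-- Equality axioms. -/
inductive EqAx : Formula → Prop
  | refl : EqAx (.nall 0 (.eq (.var 0) (.var 0)))
  | symm : EqAx (.nall 0 (.nall 1
      ((Formula.eq (.var 0) (.var 1)).imp (.eq (.var 1) (.var 0)))))
  | trans : EqAx (.nall 0 (.nall 1 (.nall 2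
      ((Formula.and (.eq (.var 0) (.var 1)) (.eq (.var 1) (.var 2))).imp
        (.eq (.var 0) (.var 2))))))
  | subst (t : NTerm) (z : ℕ) : EqAx (.nall 0 (.nall 1
      ((Formula.eq (.var 0) (.var 1)).imp
        (.eq (t.substN z (.var 0)) (t.substN z (.var 1))))))

/-- Defining axioms for the primitive recursive function symbols, following
the inductive generation of the primitive recursive functions. -/
inductive PRAx : Formula → Prop
  | zero : PRAx (.nall 0 (.eq (.prim (fun _ => 0) Nat.Primrec.zero (.var 0)) .zero))
  | succ : PRAx (.nall 0 (.eq (.prim Nat.succ Nat.Primrec.succ (.var 0))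
      (.succ (.var 0))))
  | left : PRAx (.nall 0 (.nall 1
      (.eq (.prim (fun n => n.unpair.1) Nat.Primrec.left (.pair (.var 0) (.var 1)))
        (.var 0))))
  | right : PRAx (.nall 0 (.nall 1
      (.eq (.prim (fun n => n.unpair.2) Nat.Primrec.right (.pair (.var 0) (.var 1)))
        (.var 1))))
  | pair_surj : PRAx (.nall 0
      (.eq (.pair (.prim (fun n => n.unpair.1) Nat.Primrec.left (.var 0))
        (.prim (fun n => n.unpair.2) Nat.Primrec.right (.var 0))) (.var 0)))
  | pair {f g} (hf : Nat.Primrec f) (hg : Nat.Primrec g) :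
      PRAx (.nall 0 (.eq (.prim (fun n => Nat.pair (f n) (g n)) (hf.pair hg) (.var 0))
        (.pair (.prim f hf (.var 0)) (.prim g hg (.var 0)))))
  | comp {f g} (hf : Nat.Primrec f) (hg : Nat.Primrec g) :
      PRAx (.nall 0 (.eq (.prim (fun n => f (g n)) (hf.comp hg) (.var 0))
        (.prim f hf (.prim g hg (.var 0)))))
  | prec_zero {f g} (hf : Nat.Primrec f) (hg : Nat.Primrec g) :
      PRAx (.nall 0 (.eq
        (.prim _ (hf.prec hg) (.pair (.var 0) .zero)) (.prim f hf (.var 0))))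
  | prec_succ {f g} (hf : Nat.Primrec f) (hg : Nat.Primrec g) :
      PRAx (.nall 0 (.nall 1 (.eq
        (.prim _ (hf.prec hg) (.pair (.var 0) (.succ (.var 1))))
        (.prim g hg (.pair (.var 0) (.pair (.var 1)
          (.prim _ (hf.prec hg) (.pair (.var 0) (.var 1)))))))))

/-- The successor axioms (SA). -/
def SAx : Set Formula :=
  {φ | φ = .nall 0 ((Formula.eq (.succ (.var 0)) .zero).neg) ∨
    φ = .nall 0 (.nall 1
      ((Formula.eq (.succ (.var 0)) (.succ (.var 1))).imp (.eq (.var 0) (.var 1))))}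

/-- Quantifier-free induction (QF-IA). -/
def QFIAx : Set Formula :=
  {φ | ∃ (B : Formula) (x y : ℕ), B.QFree ∧
    φ = (Formula.nall x (B.imp (B.substN x (.succ (.var x))))).imp
      (.nall y ((B.substN x .zero).imp (B.substN x (.var y))))}

/-- The conversion axiom (CON). -/
def CONAx : Set Formula :=
  {φ | ∃ (x : ℕ) (t s : NTerm), φ = .eq (.app (.lam x t) s) (t.substN x s)}

/-- The recursion axioms (REC). -/
def RECAx : Set Formula :=
  {φ | (∃ (t : NTerm) (τ : FTerm), φ = .eq (.app (.recOp t τ) .zero) t) ∨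
    ∃ (t : NTerm) (τ : FTerm) (s : NTerm),
      φ = .eq (.app (.recOp t τ) (.succ s)) (.app τ (.app (.recOp t τ) s))}

/-- Quantifier-free choice (QF-AC⁰⁰). -/
def QFACAx : Set Formula :=
  {φ | ∃ (B : Formula) (x y a z : ℕ), B.QFree ∧
    φ = (Formula.nall x (.nex y B)).imp
      (.fex a (.nall z ((B.substN x (.var z)).substN y (.app (.fvar a) (.var z)))))}

/-- Markov's principle (MP). -/
def MPAx : Set Formula :=
  {φ | ∃ (B : Formula) (x y : ℕ), B.QFree ∧
    φ = ((Formula.nex x B).neg.neg).imp (.nex y (B.substN x (.var y)))}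

/-- The law of the excluded middle (for the defined disjunction). -/
def LEMAx : Set Formula :=
  {φ | ∃ (ψ : Formula) (x : ℕ), x ∉ ψ.fvN ∧ φ = vee x ψ ψ.neg}

/-- The axioms of `EL₀`. -/
def EL0Ax : Set Formula :=
  (fun φ => EqAx φ) ∪ (fun φ => PRAx φ) ∪ SAx ∪ QFIAx ∪ CONAx ∪ RECAx ∪ QFACAx

/-- The axioms of `EL₀ + MP`. -/
def EL0MPAx : Set Formula := EL0Ax ∪ MPAx

/-- The axioms of `RCA₀`, presented as `EL₀` plus the law of excluded middle. -/
def RCA0Ax : Set Formula := EL0Ax ∪ LEMAx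

/-- Turning a set of axioms into a set of hypothesis sequents. -/
def axHyps (A : Set Formula) : Set (List Formula × Formula) :=
  {p | p.1 = [] ∧ A p.2}

/-! ## Contraction-similarity -/

/-- One step of replacing a subformula `χ` by `χ ∧ χ`. -/
inductive ConStep : Formula → Formula → Prop
  | here (χ : Formula) : ConStep χ (.and χ χ)
  | andl {a a' b} : ConStep a a' → ConStep (.and a b) (.and a' b)
  | andr {a b b'} : ConStep b b' → ConStep (.and a b) (.and a b')
  | impl {a a' b} : ConStep a a' → ConStep (.imp a b) (.imp a' b)
  | impr {a b b'} : ConStep b b' → ConStep (.imp a b) (.imp a b')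
  | nall {x a a'} : ConStep a a' → ConStep (.nall x a) (.nall x a')
  | nex {x a a'} : ConStep a a' → ConStep (.nex x a) (.nex x a')
  | fall {x a a'} : ConStep a a' → ConStep (.fall x a) (.fall x a')
  | fex {x a a'} : ConStep a a' → ConStep (.fex x a) (.fex x a')

/-- `φ` is contraction-similar to `ψ`: `φ` is obtained from `ψ` by finitely
many replacements of a subformula `χ` by `χ ∧ χ`. -/
def ConSim (φ ψ : Formula) : Prop := Relation.ReflTransGen ConStep ψ φ

/-- The formulas contraction-similar to some formula in `A`. -/
def ConAx (A : Set Formula) : Set Formula := {φ | ∃ ψ ∈ A, ConSim φ ψ}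

/-- A context `Γ'` is contraction-similar to `Γ` if there is a surjection of
`Γ'` onto `Γ` linking each formula of `Γ'` to a formula of `Γ` to which it is
contraction-similar. -/
def ConSimCtx (Γ' Γ : List Formula) : Prop :=
  ∃ f : Fin Γ'.length → Fin Γ.length, Function.Surjective f ∧
    ∀ i, ConSim (Γ'.get i) (Γ.get (f i))

/-! ## Π¹₂-formulas -/

/-- `φ` is a Π¹₂-formula `∀α(ξ(α) → ∃β ψ(α,β))` with `ξ, ψ` arithmetical. -/
def IsPi12 (φ : Formula) : Prop :=
  ∃ (a : ℕ) (ξ : Formula) (b : ℕ) (ψ : Formula),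
    ξ.Arith ∧ ψ.Arith ∧ φ = .fall a (ξ.imp (.fex b ψ))

/-- A conventionally presented Π¹₂-pair: `ξ` has (at most) the free function
variable `α = 1`, and `ψ` the free function variables `α = 1`, `β = 2`;
neither has free number variables. -/
def Pi12Pair (ξ ψ : Formula) : Prop :=
  ξ.Arith ∧ ψ.Arith ∧ ξ.fvN = [] ∧ ψ.fvN = [] ∧
    (∀ i ∈ ξ.fvF, i = 1) ∧ (∀ i ∈ ψ.fvF, i = 1 ∨ i = 2)

/-- Index of the function variable `α_j`. -/
def alphaIdx (j : ℕ) : ℕ := 2 * j + 1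

/-- Index of the function variable `β_j`. -/
def betaIdx (j : ℕ) : ℕ := 2 * j + 2

/-- Renaming a conventional Π¹₂-component into slot `i`:
`α = 1 ↦ α_i` and `β = 2 ↦ β_i`. -/
def substSlot (χ : Formula) (i : ℕ) : Formula :=
  χ.substAll NTerm.var
    (fun j => if j = 1 then .fvar (alphaIdx i) else if j = 2 then .fvar (betaIdx i) else .fvar j)

/-- The Π¹₂-formula `ζᵢ = ∀α_{2i+1}(ξ(α_{2i+1}) → ∃α_{2i+2} ψ(α_{2i+1},α_{2i+2}))`
in slot `i`. -/
def slotF (i : ℕ) (ξ ψ : Formula) : Formula :=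
  .fall (alphaIdx i) ((substSlot ξ i).imp (.fex (betaIdx i) (substSlot ψ i)))

/-- The Π¹₂-formula `ζ = ∀α₁(ξ(α₁) → ∃α₂ ψ(α₁,α₂))`. -/
def Pi12F (ξ ψ : Formula) : Formula := slotF 0 ξ ψ

/-- The context `ζ₁, …, ζₙ` with the paper's canonical variable numbering
`α₃, α₄, …, α_{2n+1}, α_{2n+2}`. -/
def ctxOf (n : ℕ) (xi psi : ℕ → Formula) : List Formula :=
  (List.range n).map fun t => slotF (t + 1) (xi (t + 1)) (psi (t + 1))

/-- Number-negativity: every first-order quantifier is in the scope of a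
negation. -/
def NumNegOK : Formula → Prop
  | .eq _ _ => True
  | .falsum => True
  | .and a b => NumNegOK a ∧ NumNegOK b
  | .imp a .falsum => (fun _ => True) a
  | .imp a b => NumNegOK a ∧ NumNegOK b
  | .nall _ _ => False
  | .nex _ _ => False
  | .fall _ a => NumNegOK a
  | .fex _ a => NumNegOK a

/-! ## Kuroda's negative translation -/

/-- The inner part `φ*` of the Kuroda negative translation. -/
def kstar : Formula → Formula
  | .eq t s => .eq t s
  | .falsum => .falsum
  | .and a b => .and (kstar a) (kstar b)
  | .imp a b => .imp (kstar a) (kstar b)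
  | .nall x a => .nall x ((kstar a).neg.neg)
  | .nex x a => .nex x (kstar a)
  | .fall x a => .fall x ((kstar a).neg.neg)
  | .fex x a => .fex x (kstar a)

/-- The Kuroda negative translation `φ^q = ¬¬φ*`. -/
def kuroda (φ : Formula) : Formula := (kstar φ).neg.neg


/-! ## Turing functionals (semantics) -/

/-- The code of the course-of-values `⟨g(0), …, g(k-1)⟩` of an oracle. -/
def covCode (g : ℕ → ℕ) (k : ℕ) : ℕ := Encodable.encode ((List.range k).map g)

/-- Kleene's `T`-predicate for oracle computations: the computation coded by
`K` (a pair of a step bound and an output) is a halting computation of the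
`E`-th machine with oracle (course-of-values) `g` on input `(NM, XS, A)`. -/
def TSem (E NM : ℕ) (g : ℕ → ℕ) (XS A K : ℕ) : Prop :=
  Nat.Partrec.Code.evaln K.unpair.1 (Denumerable.ofNat Nat.Partrec.Code E)
    (Nat.pair (covCode g K.unpair.1) (Nat.pair NM (Nat.pair XS A))) = some K.unpair.2

/-- The output extracted from a halting computation. -/
def USem (K : ℕ) : ℕ := K.unpair.2

/-- The `e`-th Turing functional with a single (joined) oracle. -/
noncomputable def PhiPart (e nm : ℕ) (g : ℕ → ℕ) (xs a : ℕ) : Part ℕ :=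
  letI : DecidablePred fun K => TSem e nm g xs a K := fun _ => Classical.propDecidable _
  ⟨∃ K, TSem e nm g xs a K, fun h => USem (Nat.find h)⟩

/-- The join of two oracles. -/
def join2 (g h : ℕ → ℕ) : ℕ → ℕ := fun m => if m % 2 = 0 then g (m / 2) else h (m / 2)

/-- The join of a finite list of oracles. -/
def joinList (fs : List (ℕ → ℕ)) : ℕ → ℕ := fs.foldr join2 fun _ => 0

/-- `Phi e fs as a`: the value of the `e`-th Turing functional on the function
arguments `fs` and number arguments `as`, applied to `a`.  (As in the paper,
the number value of `Φ_e(fs, as)` is its value at `a = 0`.) -/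
noncomputable def Phi (e : ℕ) (fs : List (ℕ → ℕ)) (as : List ℕ) (a : ℕ) : Part ℕ :=
  PhiPart e (Nat.pair fs.length as.length) (joinList fs) (Encodable.encode as) a

/-! ## The Kleene normal form (Theorem 2.7 of the paper)

A `KleeneNF` consists of a quantifier-free formula `T` (with number variables
`0,…,4` standing for `e`, `⟨n,m⟩`, `⟨x⃗⟩`, `a`, `k`, and the function variable
`0` standing for the joined oracle `β`) and a term `s` (with number variable
`4` standing for `k`) which define the Turing functionals inside `EL₀`. -/
structure KleeneNF where
  T : Formula
  s : NTerm
  qfT : T.QFree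
  fvNT : ∀ i ∈ T.fvN, i ≤ 4
  fvFT : ∀ i ∈ T.fvF, i = 0
  fvNs : ∀ i ∈ s.fvN, i = 4
  fvFs : s.fvF = []
  specT : ∀ (E NM XS A K : ℕ) (g : ℕ → ℕ),
    Truth (fun i => [E, NM, XS, A, K].getD i 0) (fun _ => g) T ↔ TSem E NM g XS A K
  specs : ∀ (ρ : ℕ → ℕ) (ρF : ℕ → ℕ → ℕ), evalN ρ ρF s = USem (ρ 4)

/-! ## Deep terms for the formalised Turing functionals -/

/-- Numerals. -/
def numT : ℕ → NTerm
  | 0 => .zero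
  | n + 1 => .succ (numT n)

/-- The coding term `⟨t₁, …, tₘ⟩` of a tuple (list coding). -/
def tupleTerm (l : List NTerm) : NTerm :=
  l.foldr (fun t acc => .succ (.pair t acc)) .zero

theorem primrec_mod_two : Nat.Primrec fun n => n % 2 :=
  Primrec.nat_iff.mp ((Primrec.nat_mod.comp Primrec.id (Primrec.const 2)))

theorem primrec_div_two : Nat.Primrec fun n => n / 2 :=
  Primrec.nat_iff.mp ((Primrec.nat_div.comp Primrec.id (Primrec.const 2)))

theorem primrec_one_sub : Nat.Primrec fun n => 1 - n :=
  Primrec.nat_iff.mp ((Primrec.nat_sub.comp (Primrec.const 1) Primrec.id))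

/-- Deep binary addition. -/
def addT (t s : NTerm) : NTerm := .prim _ Nat.Primrec.add (.pair t s)

/-- Deep binary multiplication. -/
def mulT (t s : NTerm) : NTerm := .prim _ Nat.Primrec.mul (.pair t s)

/-- Deep `· % 2`. -/
def modTwoT (t : NTerm) : NTerm := .prim _ primrec_mod_two t

/-- Deep `· / 2`. -/
def divTwoT (t : NTerm) : NTerm := .prim _ primrec_div_two t

/-- Deep `1 - ·`. -/
def oneSubT (t : NTerm) : NTerm := .prim _ primrec_one_sub t

/-- Deep join of two function terms. -/
def join2T (σ τ : FTerm) : FTerm :=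
  .lam 500 (addT
    (mulT (oneSubT (modTwoT (.var 500))) (.app σ (divTwoT (.var 500))))
    (mulT (modTwoT (.var 500)) (.app τ (divTwoT (.var 500)))))

/-- Deep join of a finite list of function variables. -/
def joinFT (l : List ℕ) : FTerm :=
  (l.map FTerm.fvar).foldr join2T (.lam 500 .zero)

/-- The formalised statement `Φ_e(α⃗, x⃗)(a) = b` inside the language, built
from a Kleene normal form: `∃k (T(e, ⟨n,m⟩, ⊕α⃗, ⟨x⃗⟩, a, k) ∧ s(k) = b)`. -/
def phiAt (Kl : KleeneNF) (e : ℕ) (alphas : List ℕ) (xs : List NTerm)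
    (a b : NTerm) (kv : ℕ) : Formula :=
  .nex kv (.and
    (Kl.T.substAll
      (fun i => if i = 0 then numT e
        else if i = 1 then numT (Nat.pair alphas.length xs.length)
        else if i = 2 then tupleTerm xs
        else if i = 3 then a
        else if i = 4 then .var kv else .var i)
      (fun j => if j = 0 then joinFT alphas else .fvar j))
    (.eq (Kl.s.substAll (fun i => if i = 4 then .var kv else .var i) FTerm.fvar) b))

/-- The formalised statement `Φ_e(α⃗) = γ` (totality plus graph):
`∀a ∃k (T(…, a, k) ∧ s(k) = γ(a))`. -/
def phiGraphFml (Kl : KleeneNF) (e : ℕ) (alphas : List ℕ) (γ : ℕ) : Formula :=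
  .nall 600 (phiAt Kl e alphas [] (.var 600) (.app (.fvar γ) (.var 600)) 601)

/-- The formalised statement `Φ_e(α⃗) ↓`. -/
def phiConvFml (Kl : KleeneNF) (e : ℕ) (alphas : List ℕ) : Formula :=
  .nall 600 (.nex 602 (phiAt Kl e alphas [] (.var 600) (.var 602) 601))

/-! ## Formalised Weihrauch reducibility -/

/-- The list of oracle variables `α₀, …, α_{j-1}, β₁, …, β_{j-1}` available to
the functional `Φ_{e_j}`. -/
def oraclesFor (j : ℕ) : List ℕ :=
  ((List.range j).map alphaIdx) ++ ((List.range (j - 1)).map fun t => betaIdx (t + 1))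

/-- Renaming of a conventional Π¹₂-component to the variables of slot `i`
(for use in instance/solution position). -/
def atSlot (χ : Formula) (i : ℕ) : Formula := substSlot χ i

/-- Universal closure over a list of function variables. -/
def forallFs (l : List ℕ) (φ : Formula) : Formula := l.foldr .fall φ

/-- Universal closure over a list of number variables. -/
def forallNs (l : List ℕ) (φ : Formula) : Formula := l.foldr .nall φ

/-- The hypotheses `α_j = Φ_{e_j}(α₀,…,α_{j-1},β₁,…,β_{j-1})` for `1 ≤ j ≤ i`. -/
def wrGraphs (Kl : KleeneNF) (es : ℕ → ℕ) (i : ℕ) : List Formula :=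
  (List.range i).map fun t =>
    phiGraphFml Kl (es (t + 1)) (oraclesFor (t + 1)) (alphaIdx (t + 1))

/-- The `i`-th clause (for `1 ≤ i ≤ n`) of the formalised statement that `ζ₀`
Weihrauch-reduces to the composition of `ζₙ, …, ζ₁`. -/
def wrClause (Kl : KleeneNF) (xi psi : ℕ → Formula) (es : ℕ → ℕ) (i : ℕ) : Formula :=
  forallFs (((List.range (i + 1)).map alphaIdx) ++ ((List.range i).map fun t => betaIdx (t + 1)))
    ((bigAnd (wrGraphs Kl es i ++ [atSlot (xi 0) 0] ++
        ((List.range (i - 1)).map fun t => atSlot (psi (t + 2)) (t + 2)))).imp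
      (.and (phiConvFml Kl (es i) (oraclesFor i)) (atSlot (xi i) i)))

/-- The final clause of the formalised statement that `ζ₀` Weihrauch-reduces
to the composition of `ζₙ, …, ζ₁`. -/
def wrFinal (Kl : KleeneNF) (_xi psi : ℕ → Formula) (es : ℕ → ℕ) (n : ℕ) : Formula :=
  forallFs (((List.range (n + 1)).map alphaIdx) ++ ((List.range n).map fun t => betaIdx (t + 1)))
    ((bigAnd (wrGraphs Kl es n ++
        ((List.range n).map fun t => atSlot (psi (t + 1)) (t + 1)))).imp
      (.fex 2 (.and (phiGraphFml Kl (es (n + 1)) (oraclesFor (n + 1)) 2)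
        (atSlot (psi 0) 0))))

/-- The formalised statement (in the language of `EL₀`) that `ζ₀` Weihrauch-
reduces to the composition of `ζₙ, …, ζ₁`, as witnessed by `e₁, …, e_{n+1}`. -/
def WRComp (Kl : KleeneNF) (n : ℕ) (xi psi : ℕ → Formula) (es : ℕ → ℕ) : Formula :=
  .and (bigAnd ((List.range n).map fun t => wrClause Kl xi psi es (t + 1)))
    (wrFinal Kl xi psi es n)

/-- The formalised statement (in the language of `EL₀`) that `ζ₀` Weihrauch-
reduces to `ζ₁`, witnessed by `e₁, e₂`.  Here `α₀` is the function variable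
`1`, `Φ_{e₁}(α₀)` is the function variable `3`, the solution `β₀` is the
function variable `4`, and the computed solution is the function variable `2`. -/
def deepWR (Kl : KleeneNF) (ξ₀ ψ₀ ξ₁ ψ₁ : Formula) (e₁ e₂ : ℕ) : Formula :=
  .and
    (.fall 1 ((atSlot ξ₀ 0).imp (.fex 3 (.and (phiGraphFml Kl e₁ [1] 3)
      (ξ₁.substAll NTerm.var fun j => if j = 1 then .fvar 3 else .fvar j)))))
    (.fall 1 (.fall 3 (.fall 4
      ((bigAnd [atSlot ξ₀ 0, phiGraphFml Kl e₁ [1] 3,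
          ψ₁.substAll NTerm.var fun j =>
            if j = 1 then .fvar 3 else if j = 2 then .fvar 4 else .fvar j]).imp
        (.fex 2 (.and (phiGraphFml Kl e₂ [1, 3, 4] 2) (atSlot ψ₀ 0)))))))


/-! ## Realisability -/

/-- Values of a realiser: either a number or a pair `(k, e)`. -/
abbrev VW := ℕ ⊕ (ℕ × ℕ)

/-- The first coordinate `v₁` of a realiser value. -/
def vwVal : VW → ℕ
  | .inl k => k
  | .inr p => p.1

/-- The (1-based) entry `v(i)` of a realiser. -/
def atIdx (v : List VW) (i : ℕ) : VW := v.getD (i - 1) (.inl 0)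

/-- `v₁(i)`. -/
def v1 (v : List VW) (i : ℕ) : ℕ := vwVal (atIdx v i)

/-- The (1-based) function `f_i` of a sequence. -/
def fAt (fs : List (ℕ → ℕ)) (i : ℕ) : ℕ → ℕ := fs.getD (i - 1) fun _ => 0

/-- The (1-based) number `a_i` of a sequence. -/
def aAt (as : List ℕ) (i : ℕ) : ℕ := as.getD (i - 1) 0

/-- The increasing list of those (1-based) indices `i ≤ len` with `v₁(i) < k`. -/
def selIdx (len : ℕ) (val : ℕ → ℕ) (k : ℕ) : List ℕ :=
  ((List.range len).map (· + 1)).filter fun i => val i < k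

/-- The functions `f_{i₁}, …, f_{i_s}` with `v₁(i) < k`, in increasing order. -/
def selF (v : List VW) (fs : List (ℕ → ℕ)) (k : ℕ) : List (ℕ → ℕ) :=
  (selIdx v.length (v1 v) k).map (fAt fs)

/-- The numbers `a_{j₁}, …, a_{j_t}` with `w₁(j) < k`, in increasing order. -/
def selA (w : List VW) (as : List ℕ) (k : ℕ) : List ℕ :=
  (selIdx w.length (v1 w) k).map (aAt as)

/-- `(f⃗, a⃗)` is valid for `(v,w)` at `v(m)`. -/
def ValidAtV (v w : List VW) (fs : List (ℕ → ℕ)) (as : List ℕ) (m : ℕ) : Prop :=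
  ∀ k e, atIdx v m = .inr (k, e) →
    ∀ a b, b ∈ Phi e (selF v fs k) (selA w as k) a → fAt fs m a = b

/-- `(f⃗, a⃗)` is strongly valid for `(v,w)` at `v(m)`. -/
def StrongAtV (v w : List VW) (fs : List (ℕ → ℕ)) (as : List ℕ) (m : ℕ) : Prop :=
  ValidAtV v w fs as m ∧
    ∀ k e, atIdx v m = .inr (k, e) → ∀ a, (Phi e (selF v fs k) (selA w as k) a).Dom

/-- `(f⃗, a⃗)` is valid for `(v,w)` at `w(m)`. -/
def ValidAtW (v w : List VW) (fs : List (ℕ → ℕ)) (as : List ℕ) (m : ℕ) : Prop :=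
  ∀ k e, atIdx w m = .inr (k, e) →
    ∀ b, b ∈ Phi e (selF v fs k) (selA w as k) 0 → aAt as m = b

/-- `(f⃗, a⃗)` is strongly valid for `(v,w)` at `w(m)`. -/
def StrongAtW (v w : List VW) (fs : List (ℕ → ℕ)) (as : List ℕ) (m : ℕ) : Prop :=
  ValidAtW v w fs as m ∧
    ∀ k e, atIdx w m = .inr (k, e) → (Phi e (selF v fs k) (selA w as k) 0).Dom

/-- `(f⃗, a⃗)` is valid for `(v,w)`. -/
def ValidSeq (v w : List VW) (fs : List (ℕ → ℕ)) (as : List ℕ) : Prop :=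
  (∀ m, 1 ≤ m → m ≤ v.length → ValidAtV v w fs as m) ∧
    (∀ m, 1 ≤ m → m ≤ w.length → ValidAtW v w fs as m)

/-- The standard number valuation determined by `a⃗` (1-based). -/
def stdN (as : List ℕ) : ℕ → ℕ := fun j => aAt as j

/-- The standard function valuation determined by `f⃗` (1-based). -/
def stdF (fs : List (ℕ → ℕ)) : ℕ → ℕ → ℕ := fun j => fAt fs j

/-- The variables of `φ` fit within the domains of `(v, w)`. -/
def VarsOK (v w : List VW) (φ : Formula) : Prop :=
  (∀ i ∈ φ.fvN ++ φ.qbN, 1 ≤ i ∧ i ≤ w.length) ∧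
    (∀ i ∈ φ.fvF ++ φ.qbF, 1 ≤ i ∧ i ≤ v.length)

/-- The realisability relations `real⁺` (`sgn = true`) and `real⁻`
(`sgn = false`) of the paper. -/
def Real (v w : List VW) (fs : List (ℕ → ℕ)) (as : List ℕ) :
    Bool → Formula → Prop
  | _, .eq t s => FTrue (.eq t s) ∧ VarsOK v w (.eq t s) ∧
      Truth (stdN as) (stdF fs) (.eq t s)
  | _, .falsum => False
  | sgn, .and a b => FTrue (.and a b) ∧ Real v w fs as sgn a ∧ Real v w fs as sgn b
  | sgn, .imp a b => FTrue (.imp a b) ∧ (Real v w fs as (!sgn) a → Real v w fs as sgn b)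
  | true, .nex i a => FTrue (.nex i a) ∧ Real v w fs as true a ∧ StrongAtW v w fs as i
  | false, .nex i a => FTrue (.nex i a) ∧ Real v w fs as false a
  | true, .nall i a => FTrue (.nall i a) ∧ Real v w fs as true a
  | false, .nall i a => FTrue (.nall i a) ∧ Real v w fs as false a
  | true, .fex i a => FTrue (.fex i a) ∧ Real v w fs as true a ∧ StrongAtV v w fs as i
  | false, .fex i a => FTrue (.fex i a) ∧ Real v w fs as false a
  | true, .fall i a => FTrue (.fall i a) ∧ Real v w fs as true a
  | false, .fall i a => FTrue (.fall i a) ∧ Real v w fs as false a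

/-- Monotonicity of a realiser for a sequent. -/
def MonotoneFor (v w : List VW) (Γ : List Formula) (φ : Formula) : Prop :=
  ∀ χ θ, θ ∈ φ :: Γ → Subf χ θ →
    (∀ i a, (χ = .nall i a ∨ χ = .nex i a) →
      (∀ j ∈ Formula.qbN a, v1 w i < v1 w j) ∧
        (∀ j ∈ Formula.qbF a, v1 w i < v1 v j)) ∧
    (∀ i a, (χ = .fall i a ∨ χ = .fex i a) →
      (∀ j ∈ Formula.qbN a, v1 v i < v1 w j) ∧
        (∀ j ∈ Formula.qbF a, v1 v i < v1 v j))

/-- The number variables bound by a universal quantifier in positive position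
(for `sgn = true`) or by an existential quantifier in negative position. -/
def UPosN : Bool → Formula → List ℕ
  | _, .eq _ _ => []
  | _, .falsum => []
  | sgn, .and a b => UPosN sgn a ++ UPosN sgn b
  | sgn, .imp a b => UPosN (!sgn) a ++ UPosN sgn b
  | sgn, .nall i a => (if sgn then [i] else []) ++ UPosN sgn a
  | sgn, .nex i a => (if sgn then [] else [i]) ++ UPosN sgn a
  | sgn, .fall _ a => UPosN sgn a
  | sgn, .fex _ a => UPosN sgn a

/-- The function variables bound by a universal quantifier in positive
position or an existential quantifier in negative position. -/
def UPosF : Bool → Formula → List ℕ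
  | _, .eq _ _ => []
  | _, .falsum => []
  | sgn, .and a b => UPosF sgn a ++ UPosF sgn b
  | sgn, .imp a b => UPosF (!sgn) a ++ UPosF sgn b
  | sgn, .nall _ a => UPosF sgn a
  | sgn, .nex _ a => UPosF sgn a
  | sgn, .fall i a => (if sgn then [i] else []) ++ UPosF sgn a
  | sgn, .fex i a => (if sgn then [] else [i]) ++ UPosF sgn a

/-- Universality of a realiser for a sequent. -/
def UniversalFor (v w : List VW) (Γ : List Formula) (φ : Formula) : Prop :=
  (∀ i ∈ UPosN true φ, (atIdx w i).isLeft = true) ∧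
  (∀ ψ ∈ Γ, ∀ i ∈ UPosN false ψ, (atIdx w i).isLeft = true) ∧
  (∀ i ∈ UPosF true φ, (atIdx v i).isLeft = true) ∧
  (∀ ψ ∈ Γ, ∀ i ∈ UPosF false ψ, (atIdx v i).isLeft = true)

/-- `(v, w)` realises the sequent `Γ ⊢ φ`. -/
def Realises (v w : List VW) (Γ : List Formula) (φ : Formula) : Prop :=
  MonotoneFor v w Γ φ ∧ UniversalFor v w Γ φ ∧
    ∀ fs as, fs.length = v.length → as.length = w.length →
      ValidSeq v w fs as →
      (∀ ψ ∈ Γ, Real v w fs as false ψ) → Real v w fs as true φ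

/-- Truth of a conventional Π¹₂-component at slot `i` under the functions
`f_{2i+1}`, `f_{2i+2}`. -/
def holdsAt (fs : List (ℕ → ℕ)) (i : ℕ) (χ : Formula) : Prop :=
  Truth (fun _ => 0)
    (fun j => if j = 1 then fAt fs (2 * i + 1)
      else if j = 2 then fAt fs (2 * i + 2) else fun _ => 0) χ

/-- `(v, w)` strongly realises the Π¹₂-sequent `ζ₁, …, ζₙ ⊢ ζ₀` (presented by
its components `xi i = ξᵢ`, `psi i = ψᵢ` in conventional variables). -/
def StrongRealises (v w : List VW) (n : ℕ) (xi psi : ℕ → Formula) : Prop :=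
  let m := Nat.findGreatest (fun i => v1 v (2 * i) ≤ v1 v 2) n
  (∀ i, 1 ≤ i → i + 2 ≤ m → v1 v (2 * i + 1) < v1 v (2 * i + 3)) ∧
  Realises v w (ctxOf n xi psi) (Pi12F (xi 0) (psi 0)) ∧
  (∀ i j, 1 ≤ i → i ≤ m → 0 < v1 w j → v1 v i < v1 w j) ∧
  (∀ fs as, fs.length = v.length → as.length = w.length → ValidSeq v w fs as →
    ∀ i, 1 ≤ i → i ≤ m → holdsAt fs 0 (xi 0) →
      (∀ j, 1 ≤ j → j < i → holdsAt fs j (psi j)) →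
      holdsAt fs i (xi i) ∧ StrongAtV v w fs as (2 * i + 1)) ∧
  (∀ fs as, fs.length = v.length → as.length = w.length → ValidSeq v w fs as →
    holdsAt fs 0 (xi 0) → (∀ j, 1 ≤ j → j ≤ n → holdsAt fs j (psi j)) →
      StrongAtV v w fs as 2)

/-! ## The formalised realisability predicate (a formula of `EL₀`) -/

open Classical in
/-- Embedding of a decidable meta-level side condition as a formula. -/
noncomputable def propF (p : Prop) : Formula := if p then trueF else .falsum

/-- The deep universal closure of a formula. -/
def closF (φ : Formula) : Formula :=
  φ.fvN.foldr .nall (φ.fvF.foldr .fall φ)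

/-- Instantiation of `φ` at the generic sequence: `α_i ↦` function variable
`700 + i`, `x_j ↦` number variable `800 + j`. -/
def instSub (φ : Formula) : Formula :=
  φ.substAll (fun i => .var (800 + i)) (fun i => .fvar (700 + i))

/-- The formalised statement that the generic sequence is valid at `v(m)`. -/
def dValidAtV (Kl : KleeneNF) (v w : List VW) (m : ℕ) : Formula :=
  match atIdx v m with
  | .inl _ => trueF
  | .inr (k, e) =>
      .nall 600 (.nall 602 ((phiAt Kl e
          ((selIdx v.length (v1 v) k).map (700 + ·))
          ((selIdx w.length (v1 w) k).map fun j => NTerm.var (800 + j))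
          (.var 600) (.var 602) 601).imp
        (.eq (.app (.fvar (700 + m)) (.var 600)) (.var 602))))

/-- The formalised statement that the generic sequence is strongly valid at
`v(m)`. -/
def dStrongAtV (Kl : KleeneNF) (v w : List VW) (m : ℕ) : Formula :=
  .and (dValidAtV Kl v w m)
    (match atIdx v m with
    | .inl _ => trueF
    | .inr (k, e) =>
        .nall 600 (.nex 602 (phiAt Kl e
          ((selIdx v.length (v1 v) k).map (700 + ·))
          ((selIdx w.length (v1 w) k).map fun j => NTerm.var (800 + j))
          (.var 600) (.var 602) 601)))

/-- The formalised statement that the generic sequence is valid at `w(m)`. -/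
def dValidAtW (Kl : KleeneNF) (v w : List VW) (m : ℕ) : Formula :=
  match atIdx w m with
  | .inl _ => trueF
  | .inr (k, e) =>
      .nall 602 ((phiAt Kl e
          ((selIdx v.length (v1 v) k).map (700 + ·))
          ((selIdx w.length (v1 w) k).map fun j => NTerm.var (800 + j))
          .zero (.var 602) 601).imp
        (.eq (.var (800 + m)) (.var 602)))

/-- The formalised statement that the generic sequence is strongly valid at
`w(m)`. -/
def dStrongAtW (Kl : KleeneNF) (v w : List VW) (m : ℕ) : Formula :=
  .and (dValidAtW Kl v w m)
    (match atIdx w m with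
    | .inl _ => trueF
    | .inr (k, e) =>
        .nex 602 (phiAt Kl e
          ((selIdx v.length (v1 v) k).map (700 + ·))
          ((selIdx w.length (v1 w) k).map fun j => NTerm.var (800 + j))
          .zero (.var 602) 601))

/-- The formalised realisability relations `real⁺`/`real⁻`, as formulas. -/
noncomputable def dReal (Kl : KleeneNF) (v w : List VW) : Bool → Formula → Formula
  | _, .eq t s => bigAnd [closF (.eq t s), propF (VarsOK v w (.eq t s)), instSub (.eq t s)]
  | _, .falsum => .falsum
  | sgn, .and a b => bigAnd [closF (.and a b), dReal Kl v w sgn a, dReal Kl v w sgn b]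
  | sgn, .imp a b => .and (closF (.imp a b))
      ((dReal Kl v w (!sgn) a).imp (dReal Kl v w sgn b))
  | true, .nex i a => bigAnd [closF (.nex i a), dReal Kl v w true a, dStrongAtW Kl v w i]
  | false, .nex i a => .and (closF (.nex i a)) (dReal Kl v w false a)
  | true, .nall i a => .and (closF (.nall i a)) (dReal Kl v w true a)
  | false, .nall i a => .and (closF (.nall i a)) (dReal Kl v w false a)
  | true, .fex i a => bigAnd [closF (.fex i a), dReal Kl v w true a, dStrongAtV Kl v w i]
  | false, .fex i a => .and (closF (.fex i a)) (dReal Kl v w false a)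
  | true, .fall i a => .and (closF (.fall i a)) (dReal Kl v w true a)
  | false, .fall i a => .and (closF (.fall i a)) (dReal Kl v w false a)

/-- The formalised (deep) statement `(v, w) real (Γ ⊢ φ)`: a formula of the
language of `EL₀`, as in Section 4 of the paper. -/
noncomputable def RealF (Kl : KleeneNF) (v w : List VW) (Γ : List Formula)
    (φ : Formula) : Formula :=
  .and (propF (MonotoneFor v w Γ φ ∧ UniversalFor v w Γ φ))
    (forallFs ((List.range v.length).map fun t => 700 + (t + 1))
      (forallNs ((List.range w.length).map fun t => 800 + (t + 1))
        ((bigAnd (((List.range v.length).map fun t => dValidAtV Kl v w (t + 1)) ++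
            ((List.range w.length).map fun t => dValidAtW Kl v w (t + 1)))).imp
          ((bigAnd (Γ.map (dReal Kl v w false))).imp (dReal Kl v w true φ)))))


/-! ## Auxiliary development for Statement 8 -/

section KurodaProof

/-! ### Substitution lemmas -/

mutual
theorem NTerm.substAll_congr : ∀ (t : NTerm) {σ σ' : ℕ → NTerm} {σF σF' : ℕ → FTerm},
    (∀ i ∈ t.fvN, σ i = σ' i) → (∀ i ∈ t.fvF, σF i = σF' i) →
    t.substAll σ σF = t.substAll σ' σF'
  | .var i, _, _, _, _, h1, _ => h1 i (by simp [NTerm.fvN])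
  | .zero, _, _, _, _, _, _ => rfl
  | .succ t, _, _, _, _, h1, h2 => by
      simp only [NTerm.substAll]
      exact congrArg _ (NTerm.substAll_congr t (fun i hi => h1 i (by simpa [NTerm.fvN] using hi))
        (fun i hi => h2 i (by simpa [NTerm.fvF] using hi)))
  | .pair t s, _, _, _, _, h1, h2 => by
      simp only [NTerm.substAll]
      rw [NTerm.substAll_congr t (fun i hi => h1 i (by simp [NTerm.fvN, hi]))
        (fun i hi => h2 i (by simp [NTerm.fvF, hi])),
        NTerm.substAll_congr s (fun i hi => h1 i (by simp [NTerm.fvN, hi]))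
        (fun i hi => h2 i (by simp [NTerm.fvF, hi]))]
  | .prim f hf t, _, _, _, _, h1, h2 => by
      simp only [NTerm.substAll]
      rw [NTerm.substAll_congr t (fun i hi => h1 i (by simpa [NTerm.fvN] using hi))
        (fun i hi => h2 i (by simpa [NTerm.fvF] using hi))]
  | .app τ t, _, _, _, _, h1, h2 => by
      simp only [NTerm.substAll]
      rw [NTerm.substAll_congr t (fun i hi => h1 i (by simp [NTerm.fvN, hi]))
        (fun i hi => h2 i (by simp [NTerm.fvF, hi])),
        FTerm.substAll_congr τ (fun i hi => h1 i (by simp [NTerm.fvN, hi]))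
        (fun i hi => h2 i (by simp [NTerm.fvF, hi]))]

theorem FTerm.substAll_congr : ∀ (τ : FTerm) {σ σ' : ℕ → NTerm} {σF σF' : ℕ → FTerm},
    (∀ i ∈ τ.fvN, σ i = σ' i) → (∀ i ∈ τ.fvF, σF i = σF' i) →
    τ.substAll σ σF = τ.substAll σ' σF'
  | .fvar i, _, _, _, _, _, h2 => h2 i (by simp [FTerm.fvF])
  | .lam x t, σ, σ', σF, σF', h1, h2 => by
      simp only [FTerm.substAll]
      rw [NTerm.substAll_congr t (fun i hi => ?_)
        (fun i hi => h2 i (by simpa [FTerm.fvF] using hi))]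
      by_cases hix : i = x
      · subst hix; simp
      · simp only [Function.update_of_ne hix]
        exact h1 i (by simp [FTerm.fvN, List.mem_filter, hi, hix])
  | .recOp t τ, _, _, _, _, h1, h2 => by
      simp only [FTerm.substAll]
      rw [NTerm.substAll_congr t (fun i hi => h1 i (by simp [FTerm.fvN, hi]))
        (fun i hi => h2 i (by simp [FTerm.fvF, hi])),
        FTerm.substAll_congr τ (fun i hi => h1 i (by simp [FTerm.fvN, hi]))
        (fun i hi => h2 i (by simp [FTerm.fvF, hi]))]
end

theorem Formula.substAll_congr : ∀ (φ : Formula) {σ σ' : ℕ → NTerm} {σF σF' : ℕ → FTerm},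
    (∀ i ∈ φ.fvN, σ i = σ' i) → (∀ i ∈ φ.fvF, σF i = σF' i) →
    φ.substAll σ σF = φ.substAll σ' σF'
  | .eq t s, _, _, _, _, h1, h2 => by
      simp only [Formula.substAll]
      rw [NTerm.substAll_congr t (fun i hi => h1 i (by simp [Formula.fvN, hi]))
        (fun i hi => h2 i (by simp [Formula.fvF, hi])),
        NTerm.substAll_congr s (fun i hi => h1 i (by simp [Formula.fvN, hi]))
        (fun i hi => h2 i (by simp [Formula.fvF, hi]))]
  | .falsum, _, _, _, _, _, _ => rfl
  | .and a b, _, _, _, _, h1, h2 => by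
      simp only [Formula.substAll]
      rw [Formula.substAll_congr a (fun i hi => h1 i (by simp [Formula.fvN, hi]))
        (fun i hi => h2 i (by simp [Formula.fvF, hi])),
        Formula.substAll_congr b (fun i hi => h1 i (by simp [Formula.fvN, hi]))
        (fun i hi => h2 i (by simp [Formula.fvF, hi]))]
  | .imp a b, _, _, _, _, h1, h2 => by
      simp only [Formula.substAll]
      rw [Formula.substAll_congr a (fun i hi => h1 i (by simp [Formula.fvN, hi]))
        (fun i hi => h2 i (by simp [Formula.fvF, hi])),
        Formula.substAll_congr b (fun i hi => h1 i (by simp [Formula.fvN, hi]))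
        (fun i hi => h2 i (by simp [Formula.fvF, hi]))]
  | .nall x a, σ, σ', σF, σF', h1, h2 => by
      simp only [Formula.substAll]
      rw [Formula.substAll_congr a (fun i hi => ?_)
        (fun i hi => h2 i (by simpa [Formula.fvF] using hi))]
      by_cases hix : i = x
      · subst hix; simp
      · simp only [Function.update_of_ne hix]
        exact h1 i (by simp [Formula.fvN, List.mem_filter, hi, hix])
  | .nex x a, σ, σ', σF, σF', h1, h2 => by
      simp only [Formula.substAll]
      rw [Formula.substAll_congr a (fun i hi => ?_)
        (fun i hi => h2 i (by simpa [Formula.fvF] using hi))]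
      by_cases hix : i = x
      · subst hix; simp
      · simp only [Function.update_of_ne hix]
        exact h1 i (by simp [Formula.fvN, List.mem_filter, hi, hix])
  | .fall x a, σ, σ', σF, σF', h1, h2 => by
      simp only [Formula.substAll]
      rw [Formula.substAll_congr a (fun i hi => h1 i (by simpa [Formula.fvN] using hi))
        (fun i hi => ?_)]
      by_cases hix : i = x
      · subst hix; simp
      · simp only [Function.update_of_ne hix]
        exact h2 i (by simp [Formula.fvF, List.mem_filter, hi, hix])
  | .fex x a, σ, σ', σF, σF', h1, h2 => by
      simp only [Formula.substAll]
      rw [Formula.substAll_congr a (fun i hi => h1 i (by simpa [Formula.fvN] using hi))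
        (fun i hi => ?_)]
      by_cases hix : i = x
      · subst hix; simp
      · simp only [Function.update_of_ne hix]
        exact h2 i (by simp [Formula.fvF, List.mem_filter, hi, hix])

mutual
theorem NTerm.substAll_id : ∀ t : NTerm, t.substAll NTerm.var FTerm.fvar = t
  | .var _ => rfl
  | .zero => rfl
  | .succ t => by simp only [NTerm.substAll]; rw [NTerm.substAll_id t]
  | .pair t s => by simp only [NTerm.substAll]; rw [NTerm.substAll_id t, NTerm.substAll_id s]
  | .prim f hf t => by simp only [NTerm.substAll]; rw [NTerm.substAll_id t]
  | .app τ t => by simp only [NTerm.substAll]; rw [NTerm.substAll_id t, FTerm.substAll_id τ]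

theorem FTerm.substAll_id : ∀ τ : FTerm, τ.substAll NTerm.var FTerm.fvar = τ
  | .fvar _ => rfl
  | .lam x t => by
      simp only [FTerm.substAll]
      rw [show Function.update NTerm.var x (NTerm.var x) = NTerm.var from
        Function.update_eq_self x NTerm.var, NTerm.substAll_id t]
  | .recOp t τ => by simp only [FTerm.substAll]; rw [NTerm.substAll_id t, FTerm.substAll_id τ]
end

theorem Formula.substAll_id : ∀ φ : Formula, φ.substAll NTerm.var FTerm.fvar = φ
  | .eq t s => by simp only [Formula.substAll]; rw [NTerm.substAll_id, NTerm.substAll_id]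
  | .falsum => rfl
  | .and a b => by simp only [Formula.substAll]; rw [Formula.substAll_id a, Formula.substAll_id b]
  | .imp a b => by simp only [Formula.substAll]; rw [Formula.substAll_id a, Formula.substAll_id b]
  | .nall x a => by
      simp only [Formula.substAll]
      rw [Function.update_eq_self x NTerm.var, Formula.substAll_id a]
  | .nex x a => by
      simp only [Formula.substAll]
      rw [Function.update_eq_self x NTerm.var, Formula.substAll_id a]
  | .fall x a => by
      simp only [Formula.substAll]
      rw [Function.update_eq_self x FTerm.fvar, Formula.substAll_id a]
  | .fex x a => by
      simp only [Formula.substAll]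
      rw [Function.update_eq_self x FTerm.fvar, Formula.substAll_id a]

theorem Formula.substN_id (φ : Formula) (x : ℕ) : φ.substN x (.var x) = φ := by
  unfold Formula.substN
  rw [Function.update_eq_self x NTerm.var, Formula.substAll_id]

theorem Formula.substF_id (φ : Formula) (x : ℕ) : φ.substF x (.fvar x) = φ := by
  unfold Formula.substF
  rw [Function.update_eq_self x FTerm.fvar, Formula.substAll_id]

theorem Formula.substN_not_free {φ : Formula} {x : ℕ} (h : x ∉ φ.fvN) (t : NTerm) :
    φ.substN x t = φ := by
  unfold Formula.substN
  rw [Formula.substAll_congr φ (σ' := NTerm.var) (σF' := FTerm.fvar)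
    (fun i hi => by
      have hix : i ≠ x := fun hix => h (hix ▸ hi)
      simp [Function.update_of_ne hix]) (fun _ _ => rfl)]
  exact Formula.substAll_id φ

/-! ### Lemmas about the Kuroda star translation -/

theorem kstar_substAll : ∀ (φ : Formula) (σ : ℕ → NTerm) (σF : ℕ → FTerm),
    kstar (φ.substAll σ σF) = (kstar φ).substAll σ σF
  | .eq _ _, _, _ => rfl
  | .falsum, _, _ => rfl
  | .and a b, σ, σF => by
      simp only [Formula.substAll, kstar]
      rw [kstar_substAll a, kstar_substAll b]
  | .imp a b, σ, σF => by
      simp only [Formula.substAll, kstar]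
      rw [kstar_substAll a, kstar_substAll b]
  | .nall x a, σ, σF => by
      simp only [Formula.substAll, kstar, Formula.neg]
      rw [kstar_substAll a]
  | .nex x a, σ, σF => by
      simp only [Formula.substAll, kstar]
      rw [kstar_substAll a]
  | .fall x a, σ, σF => by
      simp only [Formula.substAll, kstar, Formula.neg]
      rw [kstar_substAll a]
  | .fex x a, σ, σF => by
      simp only [Formula.substAll, kstar]
      rw [kstar_substAll a]

theorem kstar_substN (φ : Formula) (x : ℕ) (t : NTerm) :
    kstar (φ.substN x t) = (kstar φ).substN x t := kstar_substAll φ _ _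

theorem kstar_substF (φ : Formula) (x : ℕ) (τ : FTerm) :
    kstar (φ.substF x τ) = (kstar φ).substF x τ := kstar_substAll φ _ _

theorem kstar_fvN : ∀ φ : Formula, (kstar φ).fvN = φ.fvN
  | .eq _ _ => rfl
  | .falsum => rfl
  | .and a b => by simp only [kstar, Formula.fvN]; rw [kstar_fvN a, kstar_fvN b]
  | .imp a b => by simp only [kstar, Formula.fvN]; rw [kstar_fvN a, kstar_fvN b]
  | .nall x a => by
      simp only [kstar, Formula.fvN, Formula.neg, List.append_nil]; rw [kstar_fvN a]
  | .nex x a => by simp only [kstar, Formula.fvN]; rw [kstar_fvN a]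
  | .fall x a => by
      simp only [kstar, Formula.fvN, Formula.neg, List.append_nil]; rw [kstar_fvN a]
  | .fex x a => by simp only [kstar, Formula.fvN]; rw [kstar_fvN a]

theorem kstar_fvF : ∀ φ : Formula, (kstar φ).fvF = φ.fvF
  | .eq _ _ => rfl
  | .falsum => rfl
  | .and a b => by simp only [kstar, Formula.fvF]; rw [kstar_fvF a, kstar_fvF b]
  | .imp a b => by simp only [kstar, Formula.fvF]; rw [kstar_fvF a, kstar_fvF b]
  | .nall x a => by
      simp only [kstar, Formula.fvF, Formula.neg, List.append_nil]; rw [kstar_fvF a]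
  | .nex x a => by simp only [kstar, Formula.fvF]; rw [kstar_fvF a]
  | .fall x a => by
      simp only [kstar, Formula.fvF, Formula.neg, List.append_nil]; rw [kstar_fvF a]
  | .fex x a => by simp only [kstar, Formula.fvF]; rw [kstar_fvF a]

theorem kstar_qf : ∀ {φ : Formula}, φ.QFree → kstar φ = φ
  | .eq _ _, _ => rfl
  | .falsum, _ => rfl
  | .and a b, h => by
      simp only [kstar]; rw [kstar_qf h.1, kstar_qf h.2]
  | .imp a b, h => by
      simp only [kstar]; rw [kstar_qf h.1, kstar_qf h.2]

theorem kstar_atomic {φ : Formula} (h : Atomic φ) : kstar φ = φ := by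
  cases φ <;> first | rfl | exact absurd h (by simp [Atomic])

theorem QFree_substAll : ∀ {φ : Formula}, φ.QFree → ∀ (σ : ℕ → NTerm) (σF : ℕ → FTerm),
    (φ.substAll σ σF).QFree
  | .eq _ _, _, _, _ => trivial
  | .falsum, _, _, _ => trivial
  | .and a b, h, σ, σF => ⟨QFree_substAll h.1 σ σF, QFree_substAll h.2 σ σF⟩
  | .imp a b, h, σ, σF => ⟨QFree_substAll h.1 σ σF, QFree_substAll h.2 σ σF⟩

/-! ### Freshness helpers -/

/-- Supremum of a list of naturals. -/
def supL (l : List ℕ) : ℕ := l.foldr max 0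

theorem le_supL : ∀ {l : List ℕ} {i : ℕ}, i ∈ l → i ≤ supL l
  | a :: l, i, h => by
    rcases List.mem_cons.mp h with h | h
    · subst h; exact le_max_left _ _
    · exact le_trans (le_supL h) (le_max_right _ _)

theorem not_mem_of_supL_lt {l : List ℕ} {y : ℕ} (h : supL l < y) : y ∉ l :=
  fun hm => absurd (le_supL hm) (not_le.mpr h)

/-! ### Structural lemmas for the sequent calculus -/

section Structural

variable {H : Set (List Formula × Formula)}

theorem Der.weak_append {Γ φ} (Δ : List Formula) (h : Der H fullC Γ φ) :
    Der H fullC (Δ ++ Γ) φ := by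
  induction Δ with
  | nil => exact h
  | cons ψ Δ ih => exact Der.wk ih trivial

/-- Subset lemma: derivability is preserved by passing to a superset context. -/
theorem Der.super {Γ Δ φ} (h : Der H fullC Γ φ) (hs : ∀ ψ ∈ Γ, ψ ∈ Δ) :
    Der H fullC Δ φ := by
  have h1 : Der H fullC (Γ ++ Δ) φ :=
    Der.perm (Der.weak_append Δ h) List.perm_append_comm
  clear h
  induction Γ with
  | nil => exact h1
  | cons γ Γ ih =>
    have hγ : γ ∈ Δ := hs γ (by simp)
    obtain ⟨Δ₁, Δ₂, hΔ⟩ := List.append_of_mem hγ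
    subst hΔ
    have e0 : (Γ ++ (Δ₁ ++ γ :: Δ₂)).Perm (γ :: ((Γ ++ Δ₁) ++ Δ₂)) := by
      rw [← List.append_assoc]; exact List.perm_middle
    have h2 : Der H fullC (γ :: γ :: ((Γ ++ Δ₁) ++ Δ₂)) φ :=
      Der.perm h1 (List.Perm.cons γ e0)
    have h3 : Der H fullC (γ :: ((Γ ++ Δ₁) ++ Δ₂)) φ := Der.contr h2 trivial
    have h4 : Der H fullC (Γ ++ (Δ₁ ++ γ :: Δ₂)) φ := Der.perm h3 e0.symm
    exact ih (fun ψ hψ => hs ψ (by simp [hψ])) h4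

/-- General identity sequents. -/
theorem Der.idAll : ∀ φ : Formula, Der H fullC [φ] φ := by
  intro φ
  induction φ with
  | eq t s => exact Der.id trivial
  | falsum => exact Der.id trivial
  | and a b iha ihb => exact Der.andL (Der.andR iha ihb)
  | imp a b iha ihb =>
    apply Der.impR
    refine Der.perm (Der.impL (Γ₁ := [a]) (Γ₂ := []) iha ihb (fun h => h)) ?_
    exact List.Perm.swap _ _ _
  | nall x a ih =>
    refine Der.nallR (y := x) ?_ ?_ ?_
    · rw [Formula.substN_id]
      exact Der.nallL (by rw [Formula.substN_id]; exact ih)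
    · intro χ hχ
      simp only [List.mem_singleton] at hχ; subst hχ
      simp [Formula.fvN, List.mem_filter]
    · simp [Formula.fvN, List.mem_filter]
  | nex x a ih =>
    refine Der.nexL (y := x) ?_ ?_ ?_ ?_
    · rw [Formula.substN_id]
      exact Der.nexR (t := .var x) (by rw [Formula.substN_id]; exact ih)
    · intro χ hχ; simp at hχ
    · simp [Formula.fvN, List.mem_filter]
    · simp [Formula.fvN, List.mem_filter]
  | fall x a ih =>
    refine Der.fallR (y := x) ?_ ?_ ?_
    · rw [Formula.substF_id]
      exact Der.fallL (by rw [Formula.substF_id]; exact ih)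
    · intro χ hχ
      simp only [List.mem_singleton] at hχ; subst hχ
      simp [Formula.fvF, List.mem_filter]
    · simp [Formula.fvF, List.mem_filter]
  | fex x a ih =>
    refine Der.fexL (y := x) ?_ ?_ ?_ ?_
    · rw [Formula.substF_id]
      exact Der.fexR (τ := .fvar x) (by rw [Formula.substF_id]; exact ih)
    · intro χ hχ; simp at hχ
    · simp [Formula.fvF, List.mem_filter]
    · simp [Formula.fvF, List.mem_filter]

theorem Der.assump {Γ : List Formula} {φ : Formula} (h : φ ∈ Γ) : Der H fullC Γ φ :=
  Der.super (Der.idAll φ) (by simpa using h)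

theorem Der.mpD {Γ a b} (h1 : Der H fullC Γ (.imp a b)) (h2 : Der H fullC Γ a) :
    Der H fullC Γ b := by
  have h3 : Der H fullC (.imp a b :: (Γ ++ [])) b :=
    Der.impL h2 (Der.idAll b) (fun h => h)
  have h4 : Der H fullC (Γ ++ (Γ ++ [])) b := Der.cut h1 h3 trivial
  exact Der.super h4 (by intro ψ hψ; simp at hψ; tauto)

theorem Der.exfalsoAll : ∀ φ : Formula, Der H fullC [.falsum] φ := by
  intro φ
  induction φ with
  | eq t s => exact Der.exfalso (Der.idAll _) trivial
  | falsum => exact Der.idAll _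
  | and a b iha ihb => exact Der.contr (Der.andR iha ihb) trivial
  | imp a b iha ihb => exact Der.impR (Der.wk ihb trivial)
  | nall x a ih =>
    refine Der.nallR (y := x) (by rw [Formula.substN_id]; exact ih) ?_ ?_
    · intro χ hχ; simp only [List.mem_singleton] at hχ; subst hχ; simp [Formula.fvN]
    · simp [Formula.fvN, List.mem_filter]
  | nex x a ih => exact Der.nexR (t := .var x) (by rw [Formula.substN_id]; exact ih)
  | fall x a ih =>
    refine Der.fallR (y := x) (by rw [Formula.substF_id]; exact ih) ?_ ?_
    · intro χ hχ; simp only [List.mem_singleton] at hχ; subst hχ; simp [Formula.fvF]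
    · simp [Formula.fvF, List.mem_filter]
  | fex x a ih => exact Der.fexR (τ := .fvar x) (by rw [Formula.substF_id]; exact ih)

theorem Der.exf {Γ φ} (h : Der H fullC Γ .falsum) : Der H fullC Γ φ := by
  have h2 : Der H fullC (Γ ++ []) φ := Der.cut h (Der.exfalsoAll φ) trivial
  exact Der.super h2 (by intro ψ hψ; simpa using hψ)

theorem Der.andI {Γ a b} (h1 : Der H fullC Γ a) (h2 : Der H fullC Γ b) :
    Der H fullC Γ (.and a b) :=
  Der.super (Der.andR h1 h2) (by intro ψ hψ; simp at hψ; tauto)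

theorem Der.andE1 {Γ a b} (h : Der H fullC Γ (.and a b)) : Der H fullC Γ a := by
  have h1 : Der H fullC [.and a b] a := Der.andL (Der.super (Der.idAll a) (by simp))
  have h2 : Der H fullC (Γ ++ []) a := Der.cut h h1 trivial
  exact Der.super h2 (by intro ψ hψ; simpa using hψ)

theorem Der.andE2 {Γ a b} (h : Der H fullC Γ (.and a b)) : Der H fullC Γ b := by
  have h1 : Der H fullC [.and a b] b := Der.andL (Der.super (Der.idAll b) (by simp))
  have h2 : Der H fullC (Γ ++ []) b := Der.cut h h1 trivial
  exact Der.super h2 (by intro ψ hψ; simpa using hψ)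

theorem Der.notI {Γ a} (h : Der H fullC (a :: Γ) .falsum) : Der H fullC Γ a.neg :=
  Der.impR h

theorem Der.dni {Γ a} (h : Der H fullC Γ a) : Der H fullC Γ a.neg.neg :=
  Der.impR (Der.mpD (Der.assump (List.mem_cons_self)) (Der.wk h trivial))

theorem Der.dne_falsum {Γ} (h : Der H fullC Γ (Formula.falsum.neg.neg)) :
    Der H fullC Γ .falsum :=
  Der.mpD h (Der.impR (Der.assump (List.mem_cons_self)))

theorem Der.nallE {Γ x a} (h : Der H fullC Γ (.nall x a)) (t : NTerm) :
    Der H fullC Γ (a.substN x t) := by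
  have h1 : Der H fullC [Formula.nall x a] (a.substN x t) := Der.nallL (Der.idAll _)
  have h2 := Der.cut h h1 trivial
  exact Der.super h2 (by intro ψ hψ; simpa using hψ)

theorem Der.fallE {Γ x a} (h : Der H fullC Γ (.fall x a)) (τ : FTerm) :
    Der H fullC Γ (a.substF x τ) := by
  have h1 : Der H fullC [Formula.fall x a] (a.substF x τ) := Der.fallL (Der.idAll _)
  have h2 := Der.cut h h1 trivial
  exact Der.super h2 (by intro ψ hψ; simpa using hψ)

theorem Der.nexE {Γ x a φ y} (h1 : Der H fullC Γ (.nex x a))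
    (h2 : Der H fullC (a.substN x (.var y) :: Γ) φ)
    (hΓ : ∀ χ ∈ Γ, y ∉ χ.fvN) (hφ : y ∉ φ.fvN) (hex : y ∉ (Formula.nex x a).fvN) :
    Der H fullC Γ φ := by
  have h3 : Der H fullC (.nex x a :: Γ) φ := Der.nexL h2 hΓ hφ hex
  have h4 := Der.cut h1 h3 trivial
  exact Der.super h4 (by intro ψ hψ; simp at hψ; tauto)

theorem Der.fexE {Γ x a φ y} (h1 : Der H fullC Γ (.fex x a))
    (h2 : Der H fullC (a.substF x (.fvar y) :: Γ) φ)
    (hΓ : ∀ χ ∈ Γ, y ∉ χ.fvF) (hφ : y ∉ φ.fvF) (hex : y ∉ (Formula.fex x a).fvF) :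
    Der H fullC Γ φ := by
  have h3 : Der H fullC (.fex x a :: Γ) φ := Der.fexL h2 hΓ hφ hex
  have h4 := Der.cut h1 h3 trivial
  exact Der.super h4 (by intro ψ hψ; simp at hψ; tauto)

end Structural

theorem fvN_neg (a : Formula) : a.neg.fvN = a.fvN := by
  simp [Formula.neg, Formula.fvN]

theorem fvF_neg (a : Formula) : a.neg.fvF = a.fvF := by
  simp [Formula.neg, Formula.fvF]

section DN

variable {H : Set (List Formula × Formula)}

theorem Der.dn_and {Γ a b} (h1 : Der H fullC Γ a.neg.neg) (h2 : Der H fullC Γ b.neg.neg) :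
    Der H fullC Γ (Formula.and a b).neg.neg := by
  apply Der.impR
  refine Der.mpD (Der.super h1 (fun ψ hψ => by simp [hψ])) (Der.notI ?_)
  refine Der.mpD (Der.super h2 (fun ψ hψ => by simp [hψ])) (Der.notI ?_)
  refine Der.mpD (Der.assump (show (Formula.and a b).neg ∈ _ by simp)) ?_
  exact Der.andI (Der.assump (by simp)) (Der.assump (by simp))

theorem Der.dn_imp {Γ a b} (h : Der H fullC (a :: Γ) b.neg.neg) :
    Der H fullC Γ (Formula.imp a b).neg.neg := by
  apply Der.impR
  have hnb : Der H fullC ((Formula.imp a b).neg :: Γ) b.neg := by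
    apply Der.notI
    refine Der.mpD (Der.assump (show (Formula.imp a b).neg ∈ _ by simp)) ?_
    exact Der.impR (Der.assump (by simp))
  have hna : Der H fullC ((Formula.imp a b).neg :: Γ) a.neg := by
    apply Der.notI
    refine Der.mpD (Der.super h (fun ψ hψ => by simp at hψ; rcases hψ with h | h <;> simp [h]))
      (Der.super hnb (fun ψ hψ => by simp [hψ]))
  refine Der.mpD (Der.assump (show (Formula.imp a b).neg ∈ _ by simp)) ?_
  apply Der.impR
  exact Der.exf (Der.mpD (Der.super hna (fun ψ hψ => by simp [hψ])) (Der.assump (by simp)))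

end DN

/-! ### The main induction -/

theorem kuroda_der {Γ φ} (h : Der (axHyps RCA0Ax) fullC Γ φ)
    (ax : ∀ ψ, RCA0Ax ψ → Der (axHyps EL0MPAx) fullC [] (kstar ψ).neg.neg) :
    Der (axHyps EL0MPAx) fullC (Γ.map kstar) (kstar φ).neg.neg := by
  induction h with
  | hyp hmem =>
    have h1 := hmem.1
    simp only at h1
    subst h1
    exact ax _ hmem.2
  | id hA =>
    rw [show List.map kstar [_] = [kstar _] from rfl, kstar_atomic hA]
    exact Der.dni (Der.assump (by simp))
  | exfalso h hA ih =>
    exact Der.exf (Der.dne_falsum ih)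
  | andL h ih =>
    simp only [List.map_cons, kstar] at ih ⊢
    exact Der.andL ih
  | andR h1 h2 ih1 ih2 =>
    simp only [List.map_append, kstar]
    exact Der.dn_and (Der.super ih1 (fun ψ hψ => by simp [hψ]))
      (Der.super ih2 (fun ψ hψ => by simp [hψ]))
  | @impL Γ₁ Γ₂ ψ₁ ψ₂ φ h1 h2 hcond ih1 ih2 =>
    simp only [List.map_cons, List.map_append, kstar]
    apply Der.impR
    refine Der.mpD (Der.super ih1 (fun ψ hψ => by simp [hψ])) (Der.notI ?_)
    have hψ₂ : Der (axHyps EL0MPAx) fullC (kstar ψ₁ :: (kstar φ).neg ::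
        Formula.imp (kstar ψ₁) (kstar ψ₂) :: (Γ₁.map kstar ++ Γ₂.map kstar)) (kstar ψ₂) :=
      Der.mpD (a := kstar ψ₁) (b := kstar ψ₂) (Der.assump (by simp)) (Der.assump (by simp))
    have h6 := Der.super ih2 (Δ := kstar ψ₂ :: kstar ψ₁ :: (kstar φ).neg ::
        Formula.imp (kstar ψ₁) (kstar ψ₂) :: (Γ₁.map kstar ++ Γ₂.map kstar))
      (fun ψ hψ => by simp at hψ; rcases hψ with h | h <;> simp [h])
    have h7 := Der.cut hψ₂ h6 trivial
    have h8 := Der.super h7 (Δ := kstar ψ₁ :: (kstar φ).neg ::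
        (kstar ψ₁).imp (kstar ψ₂) :: (Γ₁.map kstar ++ Γ₂.map kstar))
      (fun χ hχ => by rcases List.mem_append.mp hχ with h | h <;> exact h)
    exact Der.mpD h8 (Der.assump (by simp))
  | impR h ih =>
    simp only [List.map_cons] at ih
    simp only [kstar]
    exact Der.dn_imp ih
  | @nallL Γ ψ φ x t h ih =>
    simp only [List.map_cons, kstar] at ih ⊢
    rw [kstar_substN] at ih
    apply Der.impR
    have h0 := Der.nallE (H := axHyps EL0MPAx) (a := (kstar ψ).neg.neg) (x := x)
      (Der.assump (show Formula.nall x ((kstar ψ).neg.neg) ∈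
        (kstar φ).neg :: Formula.nall x ((kstar ψ).neg.neg) :: Γ.map kstar by simp)) t
    have h1 : Der (axHyps EL0MPAx) fullC
        ((kstar φ).neg :: Formula.nall x ((kstar ψ).neg.neg) :: Γ.map kstar)
        (((kstar ψ).substN x t).neg.neg) := h0
    refine Der.mpD h1 (Der.notI ?_)
    refine Der.mpD (Der.super ih
      (fun χ hχ => by simp at hχ; rcases hχ with h | h <;> simp [h])) (Der.assump (by simp))
  | @nallR Γ φ x y h hΓ hy ih =>
    simp only [kstar]
    apply Der.dni
    refine Der.nallR (y := y) ?_ ?_ ?_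
    · show Der _ _ _ (((kstar φ).substN x (.var y)).neg.neg)
      rw [← kstar_substN]
      exact ih
    · intro χ hχ
      rw [List.mem_map] at hχ
      obtain ⟨χ₀, hχ₀, rfl⟩ := hχ
      rw [kstar_fvN]
      exact hΓ χ₀ hχ₀
    · have e : (Formula.nall x ((kstar φ).neg.neg)).fvN = (Formula.nall x φ).fvN := by
        simp [Formula.fvN, fvN_neg, kstar_fvN]
      rw [e]; exact hy
  | @nexR Γ φ x t h ih =>
    simp only [kstar] at ih ⊢
    rw [kstar_substN] at ih
    apply Der.impR
    refine Der.mpD (Der.super ih (fun ψ hψ => by simp [hψ])) (Der.notI ?_)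
    refine Der.mpD (Der.assump (show (Formula.nex x (kstar φ)).neg ∈ _ by simp)) ?_
    exact Der.nexR (t := t) (Der.assump (by simp))
  | @nexL Γ ψ φ x y h hΓ hφ hex ih =>
    simp only [List.map_cons, kstar] at ih ⊢
    rw [kstar_substN] at ih
    apply Der.impR
    refine Der.nexE (x := x) (a := kstar ψ) (y := y) (Der.assump (by simp)) ?_ ?_ ?_ ?_
    · refine Der.mpD (Der.super ih
        (fun χ hχ => by simp at hχ; rcases hχ with h | h <;> simp [h])) (Der.assump (by simp))
    · intro χ hχ
      simp only [List.mem_cons] at hχ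
      rcases hχ with rfl | rfl | hχ
      · rw [fvN_neg, kstar_fvN]; exact hφ
      · have e : (Formula.nex x (kstar ψ)).fvN = (Formula.nex x ψ).fvN := by
          simp [Formula.fvN, kstar_fvN]
        rw [e]; exact hex
      · rw [List.mem_map] at hχ
        obtain ⟨χ₀, hχ₀, rfl⟩ := hχ
        rw [kstar_fvN]
        exact hΓ χ₀ hχ₀
    · simp [Formula.fvN]
    · have e : (Formula.nex x (kstar ψ)).fvN = (Formula.nex x ψ).fvN := by
        simp [Formula.fvN, kstar_fvN]
      rw [e]; exact hex
  | @fallL Γ ψ φ x τ h ih =>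
    simp only [List.map_cons, kstar] at ih ⊢
    rw [kstar_substF] at ih
    apply Der.impR
    have h0 := Der.fallE (H := axHyps EL0MPAx) (a := (kstar ψ).neg.neg) (x := x)
      (Der.assump (show Formula.fall x ((kstar ψ).neg.neg) ∈
        (kstar φ).neg :: Formula.fall x ((kstar ψ).neg.neg) :: Γ.map kstar by simp)) τ
    have h1 : Der (axHyps EL0MPAx) fullC
        ((kstar φ).neg :: Formula.fall x ((kstar ψ).neg.neg) :: Γ.map kstar)
        (((kstar ψ).substF x τ).neg.neg) := h0
    refine Der.mpD h1 (Der.notI ?_)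
    refine Der.mpD (Der.super ih
      (fun χ hχ => by simp at hχ; rcases hχ with h | h <;> simp [h])) (Der.assump (by simp))
  | @fallR Γ φ x y h hΓ hy ih =>
    simp only [kstar]
    apply Der.dni
    refine Der.fallR (y := y) ?_ ?_ ?_
    · show Der _ _ _ (((kstar φ).substF x (.fvar y)).neg.neg)
      rw [← kstar_substF]
      exact ih
    · intro χ hχ
      rw [List.mem_map] at hχ
      obtain ⟨χ₀, hχ₀, rfl⟩ := hχ
      rw [kstar_fvF]
      exact hΓ χ₀ hχ₀
    · have e : (Formula.fall x ((kstar φ).neg.neg)).fvF = (Formula.fall x φ).fvF := by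
        simp [Formula.fvF, fvF_neg, kstar_fvF]
      rw [e]; exact hy
  | @fexR Γ φ x τ h ih =>
    simp only [kstar] at ih ⊢
    rw [kstar_substF] at ih
    apply Der.impR
    refine Der.mpD (Der.super ih (fun ψ hψ => by simp [hψ])) (Der.notI ?_)
    refine Der.mpD (Der.assump (show (Formula.fex x (kstar φ)).neg ∈ _ by simp)) ?_
    exact Der.fexR (τ := τ) (Der.assump (by simp))
  | @fexL Γ ψ φ x y h hΓ hφ hex ih =>
    simp only [List.map_cons, kstar] at ih ⊢
    rw [kstar_substF] at ih
    apply Der.impR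
    refine Der.fexE (x := x) (a := kstar ψ) (y := y) (Der.assump (by simp)) ?_ ?_ ?_ ?_
    · refine Der.mpD (Der.super ih
        (fun χ hχ => by simp at hχ; rcases hχ with h | h <;> simp [h])) (Der.assump (by simp))
    · intro χ hχ
      simp only [List.mem_cons] at hχ
      rcases hχ with rfl | rfl | hχ
      · rw [fvF_neg, kstar_fvF]; exact hφ
      · have e : (Formula.fex x (kstar ψ)).fvF = (Formula.fex x ψ).fvF := by
          simp [Formula.fvF, kstar_fvF]
        rw [e]; exact hex
      · rw [List.mem_map] at hχ
        obtain ⟨χ₀, hχ₀, rfl⟩ := hχ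
        rw [kstar_fvF]
        exact hΓ χ₀ hχ₀
    · simp [Formula.fvF]
    · have e : (Formula.fex x (kstar ψ)).fvF = (Formula.fex x ψ).fvF := by
        simp [Formula.fvF, kstar_fvF]
      rw [e]; exact hex
  | wk h hw ih => exact Der.wk ih trivial
  | contr h hc ih => exact Der.contr ih trivial
  | perm h hp ih => exact Der.perm ih (hp.map kstar)
  | @cut Γ₁ Γ₂ ψ φ h1 h2 hc ih1 ih2 =>
    simp only [List.map_cons] at ih2
    rw [List.map_append]
    apply Der.impR
    refine Der.mpD (Der.super ih1 (fun χ hχ => by simp [hχ])) (Der.notI ?_)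
    have h6 := Der.super ih2 (Δ := kstar ψ :: (kstar φ).neg ::
        (Γ₁.map kstar ++ Γ₂.map kstar))
      (fun χ hχ => by simp at hχ; rcases hχ with h | h <;> simp [h])
    exact Der.mpD h6 (Der.assump (by simp))

/-! ### Axiom cases -/

theorem el0_hyp {φ : Formula} (h : φ ∈ EL0Ax) : Der (axHyps EL0MPAx) fullC [] φ :=
  Der.hyp ⟨rfl, Or.inl h⟩

theorem mp_hyp {φ : Formula} (h : φ ∈ MPAx) : Der (axHyps EL0MPAx) fullC [] φ :=
  Der.hyp ⟨rfl, Or.inr h⟩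

theorem mem_EL0_eq {φ : Formula} (h : EqAx φ) : φ ∈ EL0Ax :=
  Or.inl (Or.inl (Or.inl (Or.inl (Or.inl (Or.inl h)))))
theorem mem_EL0_pr {φ : Formula} (h : PRAx φ) : φ ∈ EL0Ax :=
  Or.inl (Or.inl (Or.inl (Or.inl (Or.inl (Or.inr h)))))
theorem mem_EL0_sa {φ : Formula} (h : φ ∈ SAx) : φ ∈ EL0Ax :=
  Or.inl (Or.inl (Or.inl (Or.inl (Or.inr h))))
theorem mem_EL0_qfia {φ : Formula} (h : φ ∈ QFIAx) : φ ∈ EL0Ax :=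
  Or.inl (Or.inl (Or.inl (Or.inr h)))
theorem mem_EL0_con {φ : Formula} (h : φ ∈ CONAx) : φ ∈ EL0Ax :=
  Or.inl (Or.inl (Or.inr h))
theorem mem_EL0_rec {φ : Formula} (h : φ ∈ RECAx) : φ ∈ EL0Ax :=
  Or.inl (Or.inr h)
theorem mem_EL0_qfac {φ : Formula} (h : φ ∈ QFACAx) : φ ∈ EL0Ax :=
  Or.inr h

/-- Universally quantified quantifier-free formulas. -/
inductive UQ : Formula → Prop
  | qf {φ} : φ.QFree → UQ φ
  | all {x φ} : UQ φ → UQ (.nall x φ)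

theorem uq_star {H : Set (List Formula × Formula)} : ∀ {φ : Formula}, UQ φ →
    Der H fullC [] φ → Der H fullC [] (kstar φ) := by
  intro φ hu
  induction hu with
  | qf h => intro hd; rwa [kstar_qf h]
  | @all x ψ hu ih =>
    intro hd
    simp only [kstar]
    refine Der.nallR (y := x) ?_ (by intro χ hχ; simp at hχ) ?_
    · show Der H fullC [] (((kstar ψ).neg.neg).substN x (.var x))
      rw [Formula.substN_id]
      refine Der.dni (ih ?_)
      have h2 := Der.nallE hd (NTerm.var x)
      rwa [Formula.substN_id] at h2
    · simp [Formula.fvN, List.mem_filter]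

theorem kstar_substN_qf {B : Formula} (h : B.QFree) (x : ℕ) (t : NTerm) :
    kstar (B.substN x t) = B.substN x t := kstar_qf (QFree_substAll h _ _)

theorem fresh_notin {L l : List ℕ} (hsub : ∀ i ∈ l, i ∈ L) : supL L + 1 ∉ l :=
  fun h => by have := le_supL (hsub _ h); omega

/-- Quantifier-free double negation elimination, from Markov's principle. -/
theorem Der.qf_dne {Γ : List Formula} {C : Formula} (hC : C.QFree) (v : ℕ)
    (hv : v ∉ C.fvN) (hΓ : ∀ χ ∈ Γ, v ∉ χ.fvN)
    (h : Der (axHyps EL0MPAx) fullC Γ C.neg.neg) :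
    Der (axHyps EL0MPAx) fullC Γ C := by
  have hmp : Der (axHyps EL0MPAx) fullC []
      (((Formula.nex v C).neg.neg).imp (.nex v (C.substN v (.var v)))) :=
    mp_hyp ⟨C, v, v, hC, rfl⟩
  rw [Formula.substN_id] at hmp
  have hnn : Der (axHyps EL0MPAx) fullC Γ (Formula.nex v C).neg.neg := by
    apply Der.impR
    refine Der.mpD (Der.super h (fun ψ hψ => by simp [hψ])) (Der.notI ?_)
    refine Der.mpD (Der.assump (show (Formula.nex v C).neg ∈ _ by simp)) ?_
    refine Der.nexR (t := .var v) ?_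
    rw [Formula.substN_id]
    exact Der.assump (by simp)
  have hex : Der (axHyps EL0MPAx) fullC Γ (.nex v C) :=
    Der.mpD (Der.super hmp (by simp)) hnn
  refine Der.nexE (y := v) hex ?_ hΓ hv ?_
  · rw [Formula.substN_id]; exact Der.assump (by simp)
  · simp [Formula.fvN, List.mem_filter]

theorem refl00 : Der (axHyps EL0MPAx) fullC [] (.eq .zero .zero) := by
  have h := Der.nallE (el0_hyp (mem_EL0_eq EqAx.refl)) NTerm.zero
  have e : (Formula.eq (.var 0) (.var 0)).substN 0 .zero = .eq .zero .zero := by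
    simp [Formula.substN, Formula.substAll, NTerm.substAll]
  rwa [e] at h

theorem succ_ne_zero_ax :
    Der (axHyps EL0MPAx) fullC [] (Formula.eq (.succ .zero) .zero).neg := by
  have h := Der.nallE (el0_hyp (mem_EL0_sa (Or.inl rfl))) NTerm.zero
  have e : ((Formula.eq (.succ (.var 0)) .zero).neg).substN 0 .zero =
      (Formula.eq (.succ .zero) .zero).neg := by
    simp [Formula.substN, Formula.substAll, NTerm.substAll, Formula.neg]
  rwa [e] at h

theorem kuroda_axiom : ∀ φ, RCA0Ax φ → Der (axHyps EL0MPAx) fullC [] (kstar φ).neg.neg := by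
  rintro φ (hEL | hLEM)
  · have h0 : Der (axHyps EL0MPAx) fullC [] φ := el0_hyp hEL
    rcases hEL with ((((((hEq | hPR) | hSA) | hQFIA) | hCON) | hREC) | hQFAC)
    · cases hEq with
      | refl => exact Der.dni (uq_star (UQ.all (UQ.qf trivial)) h0)
      | symm => exact Der.dni (uq_star (UQ.all (UQ.all (UQ.qf ⟨trivial, trivial⟩))) h0)
      | trans =>
        exact Der.dni (uq_star (UQ.all (UQ.all (UQ.all
          (UQ.qf ⟨⟨trivial, trivial⟩, trivial⟩)))) h0)
      | subst t z =>
        exact Der.dni (uq_star (UQ.all (UQ.all (UQ.qf ⟨trivial, trivial⟩))) h0)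
    · cases hPR with
      | zero => exact Der.dni (uq_star (UQ.all (UQ.qf trivial)) h0)
      | succ => exact Der.dni (uq_star (UQ.all (UQ.qf trivial)) h0)
      | left => exact Der.dni (uq_star (UQ.all (UQ.all (UQ.qf trivial))) h0)
      | right => exact Der.dni (uq_star (UQ.all (UQ.all (UQ.qf trivial))) h0)
      | pair_surj => exact Der.dni (uq_star (UQ.all (UQ.qf trivial)) h0)
      | pair hf hg => exact Der.dni (uq_star (UQ.all (UQ.qf trivial)) h0)
      | comp hf hg => exact Der.dni (uq_star (UQ.all (UQ.qf trivial)) h0)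
      | prec_zero hf hg => exact Der.dni (uq_star (UQ.all (UQ.qf trivial)) h0)
      | prec_succ hf hg => exact Der.dni (uq_star (UQ.all (UQ.all (UQ.qf trivial))) h0)
    · rcases hSA with rfl | rfl
      · exact Der.dni (uq_star (UQ.all (UQ.qf ⟨trivial, trivial⟩)) h0)
      · exact Der.dni (uq_star (UQ.all (UQ.all (UQ.qf ⟨trivial, trivial⟩))) h0)
    · -- Quantifier-free induction
      obtain ⟨B, x, y, hB, rfl⟩ := hQFIA
      have hB' : (B.imp (B.substN x (.succ (.var x)))).QFree :=
        ⟨hB, QFree_substAll hB _ _⟩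
      have hB'' : ((B.substN x .zero).imp (B.substN x (.var y))).QFree :=
        ⟨QFree_substAll hB _ _, QFree_substAll hB _ _⟩
      have k1 : kstar ((Formula.nall x (B.imp (B.substN x (.succ (.var x))))).imp
            (.nall y ((B.substN x .zero).imp (B.substN x (.var y))))) =
          (Formula.nall x ((B.imp (B.substN x (.succ (.var x)))).neg.neg)).imp
            (.nall y (((B.substN x .zero).imp (B.substN x (.var y))).neg.neg)) := by
        simp only [kstar, kstar_qf hB, kstar_substN_qf hB]
      rw [k1]
      apply Der.dni
      apply Der.impR
      set A := B.imp (B.substN x (.succ (.var x))) with hA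
      set A' := (B.substN x .zero).imp (B.substN x (.var y)) with hA'
      set χ₁ := Formula.nall x (A.neg.neg) with hχ₁
      have step1 : Der (axHyps EL0MPAx) fullC [χ₁] (.nall x A) := by
        set x₀ := supL ((Formula.nall x A).fvN ++ χ₁.fvN) + 1 with hx₀
        refine Der.nallR (y := x₀) ?_ ?_ ?_
        · have hdd : Der (axHyps EL0MPAx) fullC [χ₁] ((A.substN x (.var x₀)).neg.neg) :=
            Der.nallE (H := axHyps EL0MPAx) (a := A.neg.neg) (x := x)
              (Der.assump (by simp [hχ₁])) (.var x₀)
          refine Der.qf_dne (QFree_substAll hB' _ _)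
            (supL ((A.substN x (.var x₀)).fvN ++ χ₁.fvN) + 1) ?_ ?_ hdd
          · exact fresh_notin (fun i hi => by simp [hi])
          · intro χ hχ
            simp only [List.mem_singleton] at hχ; subst hχ
            exact fresh_notin (fun i hi => by simp [hi])
        · intro χ hχ
          simp only [List.mem_singleton] at hχ; subst hχ
          exact fresh_notin (fun i hi => by simp [hi])
        · exact fresh_notin (fun i hi => by simp [hi])
      have step2 : Der (axHyps EL0MPAx) fullC [χ₁] (.nall y A') :=
        Der.mpD (Der.super h0 (by simp)) step1
      set y₀ := supL ((Formula.nall y (A'.neg.neg)).fvN ++ χ₁.fvN) + 1 with hy₀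
      refine Der.nallR (y := y₀) ?_ ?_ ?_
      · exact Der.dni (Der.nallE step2 (.var y₀))
      · intro χ hχ
        simp only [List.mem_singleton] at hχ; subst hχ
        exact fresh_notin (fun i hi => by simp [hi])
      · exact fresh_notin (fun i hi => by simp [hi])
    · -- Conversion axiom
      obtain ⟨x, t, s, rfl⟩ := hCON
      exact Der.dni (uq_star (UQ.qf trivial) h0)
    · -- Recursion axioms
      rcases hREC with ⟨t, τ, rfl⟩ | ⟨t, τ, s, rfl⟩ <;>
        exact Der.dni (uq_star (UQ.qf trivial) h0)
    · -- Quantifier-free choice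
      obtain ⟨B, x, y, a, z, hB, rfl⟩ := hQFAC
      set B'' := (B.substN x (.var z)).substN y (.app (.fvar a) (.var z)) with hB''def
      have hBqf'' : B''.QFree := QFree_substAll (QFree_substAll hB _ _) _ _
      have k1 : kstar ((Formula.nall x (.nex y B)).imp
            (.fex a (.nall z B''))) =
          (Formula.nall x ((Formula.nex y B).neg.neg)).imp
            (.fex a (.nall z (B''.neg.neg))) := by
        simp only [kstar]
        rw [kstar_qf hB, kstar_qf hBqf'' ]
      rw [k1]
      apply Der.dni
      apply Der.impR
      set χ₁ := Formula.nall x ((Formula.nex y B).neg.neg) with hχ₁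
      have step1 : Der (axHyps EL0MPAx) fullC [χ₁] (.nall x (.nex y B)) := by
        set x₀ := supL ((Formula.nall x (.nex y B)).fvN ++ χ₁.fvN) + 1 with hx₀
        refine Der.nallR (y := x₀) ?_ ?_ ?_
        · have hdd : Der (axHyps EL0MPAx) fullC [χ₁]
              (((Formula.nex y B).substN x (.var x₀)).neg.neg) :=
            Der.nallE (H := axHyps EL0MPAx) (a := (Formula.nex y B).neg.neg) (x := x)
              (Der.assump (by simp [hχ₁])) (.var x₀)
          set B₂ := B.substAll
            (Function.update (Function.update NTerm.var x (NTerm.var x₀)) y (NTerm.var y))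
            FTerm.fvar with hB₂
          have hmp : Der (axHyps EL0MPAx) fullC []
              (((Formula.nex y B₂).neg.neg).imp (.nex y (B₂.substN y (.var y)))) :=
            mp_hyp ⟨B₂, y, y, QFree_substAll hB _ _, rfl⟩
          rw [Formula.substN_id] at hmp
          have hdd2 : Der (axHyps EL0MPAx) fullC [χ₁] ((Formula.nex y B₂).neg.neg) := hdd
          have : Der (axHyps EL0MPAx) fullC [χ₁] (.nex y B₂) :=
            Der.mpD (Der.super hmp (by simp)) hdd2
          exact this
        · intro χ hχ
          simp only [List.mem_singleton] at hχ; subst hχ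
          exact fresh_notin (fun i hi => by simp [hi])
        · exact fresh_notin (fun i hi => by simp [hi])
      have step2 : Der (axHyps EL0MPAx) fullC [χ₁] (.fex a (.nall z B'')) :=
        Der.mpD (Der.super h0 (by simp)) step1
      set a₀ := supL ((Formula.fex a (.nall z (B''.neg.neg))).fvF ++ χ₁.fvF ++
        (Formula.fex a (.nall z B'')).fvF) + 1 with ha₀
      refine Der.fexE (y := a₀) step2 ?_ ?_ ?_ ?_
      · set B₃ := B''.substAll (Function.update NTerm.var z (NTerm.var z))
          (Function.update FTerm.fvar a (FTerm.fvar a₀)) with hB₃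
        refine Der.fexR (τ := .fvar a₀) ?_
        show Der (axHyps EL0MPAx) fullC _ (Formula.nall z (B₃.neg.neg))
        set z₀ := supL ((Formula.nall z (B₃.neg.neg)).fvN ++
          ((Formula.nall z B'').substF a (.fvar a₀)).fvN ++ χ₁.fvN) + 1 with hz₀
        refine Der.nallR (y := z₀) ?_ ?_ ?_
        · refine Der.dni (Der.nallE (a := B₃) (x := z) (Der.assump ?_) (.var z₀))
          show Formula.nall z B₃ ∈ (Formula.nall z B'').substF a (.fvar a₀) :: [χ₁]
          exact List.mem_cons_self
        · intro χ hχ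
          simp only [List.mem_cons, List.not_mem_nil, or_false] at hχ
          rcases hχ with rfl | rfl
          · exact fresh_notin (fun i hi => by simp [hi])
          · exact fresh_notin (fun i hi => by simp [hi])
        · exact fresh_notin (fun i hi => by simp [hi])
      · intro χ hχ
        simp only [List.mem_singleton] at hχ; subst hχ
        exact fresh_notin (fun i hi => by simp [hi])
      · exact fresh_notin (fun i hi => by simp [hi])
      · exact fresh_notin (fun i hi => by simp [hi])
  · -- Law of excluded middle
    obtain ⟨ψ, x, hx, rfl⟩ := hLEM
    have hxk : x ∉ (kstar ψ).fvN := by rw [kstar_fvN]; exact hx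
    have k1 : kstar (vee x ψ ψ.neg) =
        .nex x (.and ((Formula.eq (.var x) .zero).imp (kstar ψ))
          (((Formula.eq (.var x) .zero).neg).imp ((kstar ψ).neg))) := by
      simp [vee, kstar, Formula.neg]
    rw [k1]
    set W := Formula.and ((Formula.eq (.var x) .zero).imp (kstar ψ))
      (((Formula.eq (.var x) .zero).neg).imp ((kstar ψ).neg)) with hW
    have eW : ∀ u : NTerm, W.substN x u =
        .and ((Formula.eq ((NTerm.var x).substN x u) .zero).imp (kstar ψ))
          (((Formula.eq ((NTerm.var x).substN x u) .zero).neg).imp ((kstar ψ).neg)) := by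
      intro u
      show (W.substAll _ _) = _
      rw [hW]
      simp only [Formula.substAll, Formula.neg, NTerm.substAll]
      rw [show (kstar ψ).substAll (Function.update NTerm.var x u) FTerm.fvar = kstar ψ from
        Formula.substN_not_free hxk u]
      simp [NTerm.substN, NTerm.substAll, Function.update_self]
    have eVar : ∀ u : NTerm, (NTerm.var x).substN x u = u := by
      intro u
      show (NTerm.var x).substAll _ _ = u
      simp [NTerm.substAll]
    apply Der.impR
    set N := (Formula.nex x W).neg with hN
    have hnotψ : Der (axHyps EL0MPAx) fullC [N] ((kstar ψ).neg) := by
      apply Der.notI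
      refine Der.mpD (Der.assump (show N ∈ [kstar ψ, N] by simp)) ?_
      refine Der.nexR (t := .zero) ?_
      rw [eW, eVar]
      refine Der.andI (Der.impR (Der.assump (by simp))) (Der.impR ?_)
      refine Der.exf (Der.mpD
        (Der.assump (show (Formula.eq .zero .zero).neg ∈ _ by simp)) ?_)
      exact Der.super refl00 (by simp)
    refine Der.mpD (Der.assump (show N ∈ [N] by simp)) ?_
    refine Der.nexR (t := .succ .zero) ?_
    rw [eW, eVar]
    refine Der.andI (Der.impR ?_) (Der.impR ?_)
    · refine Der.exf (Der.mpD (Der.super succ_ne_zero_ax (by simp))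
        (Der.assump (by simp)))
    · exact Der.super hnotψ (fun χ hχ => by simp at hχ; simp [hχ])

end KurodaProof

/-- If `RCA₀` proves a formula `φ`, then `EL₀ + MP` proves
the Kuroda negative translation `φ^q` of `φ`. -/
theorem rca0_to_el0mp_kuroda (φ : Formula)
    (h : Der (axHyps RCA0Ax) fullC [] φ) :
    Der (axHyps EL0MPAx) fullC [] (kuroda φ) :=
  kuroda_der h kuroda_axiom

end WeihrauchEL
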